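/- arXiv:2510.19977 — 11 statements merged into one kernel-verified Lean document; each statement's English description precedes it below -/
import Mathlib

section
/- Let d ≥ 1, let C be a finite set of classes, let p ∈ [1,∞), let ν be a probability measure on ℝ^d (the isotropic noise distribution), and let R : ℝ × ℝ → ℝ be a certified-radius function. Assume the isotropic certification property: for every measurable classifier f' : ℝ^d → C, every x ∈ ℝ^d, every class c_A ∈ C, and all reals p_A ≥ p_B such that ℙ_{ε∼ν}(f'(x+ε) = c_A) ≥ p_A and ℙ_{ε∼ν}(f'(x+ε) = c) ≤ p_B for every c ≠ c_A, it holds that for every δ ∈ ℝ^d with ‖δ‖_p ≤ R(p_A, p_B) and every class c ≠ c_A, ℙ_{ε∼ν}(f'(x+δ+ε) = c_A) ≥ ℙ_{ε∼ν}(f'(x+δ+ε) = c). Then for every measurable classifier f : ℝ^d → C, every invertible matrix Σ ∈ ℝ^{d×d}, every μ ∈ ℝ^d, every x ∈ ℝ^d, every class c'_A ∈ C, and all reals p'_A ≥ p'_B such that ℙ_{ε∼ν}(f(x + Σε + μ) = c'_A) ≥ p'_A and ℙ_{ε∼ν}(f(x + Σε + μ) = c) ≤ p'_B for every c ≠ c'_A,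 it holds that for every δ' ∈ ℝ^d with ‖Σ⁻¹δ'‖_p ≤ R(p'_A, p'_B) and every class c ≠ c'_A, ℙ_{ε∼ν}(f(x + δ' + Σε + μ) = c'_A) ≥ ℙ_{ε∼ν}(f(x + δ' + Σε + μ) = c). -/
open MeasureTheory

/-- The `ℓ_p` norm of a vector in `ℝ^d`: `(∑ i, |δ i| ^ p) ^ (1/p)`. -/
noncomputable def lpNorm {d : ℕ} (p : ℝ) (δ : Fin d → ℝ) : ℝ :=
  (∑ i, |δ i| ^ p) ^ (1 / p)

/-- Asymmetric randomized smoothing via universal transformation (general anisotropic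
noise `x + Σε + μ` with invertible matrix `Σ`). -/
theorem anisotropic_certified_robustness_matrix
    {d : ℕ} (hd : 1 ≤ d)
    {C : Type} [Fintype C] [MeasurableSpace C] [MeasurableSingletonClass C]
    (p : ℝ) (hp : 1 ≤ p)
    (ν : Measure (Fin d → ℝ)) [IsProbabilityMeasure ν]
    (R : ℝ → ℝ → ℝ)
    (hiso : ∀ f' : (Fin d → ℝ) → C, Measurable f' →
      ∀ (x : Fin d → ℝ) (cA : C) (pA pB : ℝ), pB ≤ pA →
        pA ≤ (ν {ε | f' (x + ε) = cA}).toReal →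
        (∀ c : C, c ≠ cA → (ν {ε | f' (x + ε) = c}).toReal ≤ pB) →
        ∀ δ : Fin d → ℝ, lpNorm p δ ≤ R pA pB →
          ∀ c : C, c ≠ cA →
            (ν {ε | f' (x + δ + ε) = c}).toReal ≤
              (ν {ε | f' (x + δ + ε) = cA}).toReal)
    (f : (Fin d → ℝ) → C) (hf : Measurable f)
    (S : Matrix (Fin d) (Fin d) ℝ) (hS : IsUnit S.det)
    (μ : Fin d → ℝ) (x : Fin d → ℝ) (c'A : C)
    (p'A p'B : ℝ) (hpp : p'B ≤ p'A)
    (hA : p'A ≤ (ν {ε | f (x + S.mulVec ε + μ) = c'A}).toReal)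
    (hB : ∀ c : C, c ≠ c'A →
      (ν {ε | f (x + S.mulVec ε + μ) = c}).toReal ≤ p'B) :
    ∀ δ' : Fin d → ℝ, lpNorm p (S⁻¹.mulVec δ') ≤ R p'A p'B →
      ∀ c : C, c ≠ c'A →
        (ν {ε | f (x + δ' + S.mulVec ε + μ) = c}).toReal ≤
          (ν {ε | f (x + δ' + S.mulVec ε + μ) = c'A}).toReal := by
  intro δ' hδ' c hc
  set f' : (Fin d → ℝ) → C := fun z => f (x + S.mulVec z + μ) with hf'
  have hmeas : Measurable f' := by
    apply hf.comp
    exact (measurable_const.add ((S.mulVecLin.continuous_of_finiteDimensional.measurable).comp measurable_id)).add measurable_const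
  have key := hiso f' hmeas 0 c'A p'A p'B hpp
  simp only [hf', zero_add] at key
  have key2 := key hA hB (S⁻¹.mulVec δ') hδ' c hc
  have hSS : S.mulVec (S⁻¹.mulVec δ') = δ' := by
    rw [Matrix.mulVec_mulVec, Matrix.mul_nonsing_inv _ hS, Matrix.one_mulVec]
  have hset : ∀ y : Fin d → ℝ, x + S.mulVec (S⁻¹.mulVec δ' + y) + μ = x + δ' + S.mulVec y + μ := by
    intro y
    rw [Matrix.mulVec_add, hSS]
    abel
  simpa only [hset] using key2
end

section
/- Let d ≥ 1, let C be a finite set of classes, let p ∈ [1,∞), let ν be a probability measure on ℝ^d, and let R : ℝ × ℝ → ℝ be a certified-radius function satisfying the isotropic certification property: for every measurable classifier f' : ℝ^d → C, every x ∈ ℝ^d, every class c_A ∈ C, and all reals p_A ≥ p_B such that ℙ_{ε∼ν}(f'(x+ε) = c_A) ≥ p_A and ℙ_{ε∼ν}(f'(x+ε) = c) ≤ p_B for every c ≠ c_A, it holds that for every δ ∈ ℝ^d with ‖δ‖_p ≤ R(p_A, p_B) and every class c ≠ c_A, ℙ_{ε∼ν}(f'(x+δ+ε) = c_A) ≥ ℙ_{ε∼ν}(f'(x+δ+ε)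 = c). Let σ ∈ ℝ^d with σ_i > 0 for all i, let μ ∈ ℝ^d, and let f : ℝ^d → C be measurable. For every x ∈ ℝ^d, every class c'_A ∈ C, and all reals p'_A ≥ p'_B such that ℙ_{ε∼ν}(f(x + ε⊙σ + μ) = c'_A) ≥ p'_A and ℙ_{ε∼ν}(f(x + ε⊙σ + μ) = c) ≤ p'_B for every c ≠ c'_A, it holds that for every δ' ∈ ℝ^d with ‖δ' ⊘ σ‖_p ≤ R(p'_A, p'_B) and every class c ≠ c'_A, ℙ_{ε∼ν}(f(x + δ' + ε⊙σ + μ) = c'_A) ≥ ℙ_{ε∼ν}(f(x + δ' + ε⊙σ + μ) = c). -/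
open MeasureTheory

/-- Asymmetric randomized smoothing with independent anisotropic noise
`x + ε ⊙ σ + μ` (componentwise scaling). -/
theorem anisotropic_certified_robustness_diagonal
    {d : ℕ} (hd : 1 ≤ d)
    {C : Type} [Fintype C] [MeasurableSpace C] [MeasurableSingletonClass C]
    (p : ℝ) (hp : 1 ≤ p)
    (ν : Measure (Fin d → ℝ)) [IsProbabilityMeasure ν]
    (R : ℝ → ℝ → ℝ)
    (hiso : ∀ f' : (Fin d → ℝ) → C, Measurable f' →
      ∀ (x : Fin d → ℝ) (cA : C) (pA pB : ℝ), pB ≤ pA →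
        pA ≤ (ν {ε | f' (x + ε) = cA}).toReal →
        (∀ c : C, c ≠ cA → (ν {ε | f' (x + ε) = c}).toReal ≤ pB) →
        ∀ δ : Fin d → ℝ, lpNorm p δ ≤ R pA pB →
          ∀ c : C, c ≠ cA →
            (ν {ε | f' (x + δ + ε) = c}).toReal ≤
              (ν {ε | f' (x + δ + ε) = cA}).toReal)
    (σ : Fin d → ℝ) (hσ : ∀ i, 0 < σ i) (μ : Fin d → ℝ)
    (f : (Fin d → ℝ) → C) (hf : Measurable f)
    (x : Fin d → ℝ) (c'A : C)
    (p'A p'B : ℝ) (hpp : p'B ≤ p'A)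
    (hA : p'A ≤ (ν {ε | f (x + (fun i => ε i * σ i) + μ) = c'A}).toReal)
    (hB : ∀ c : C, c ≠ c'A →
      (ν {ε | f (x + (fun i => ε i * σ i) + μ) = c}).toReal ≤ p'B) :
    ∀ δ' : Fin d → ℝ, lpNorm p (fun i => δ' i / σ i) ≤ R p'A p'B →
      ∀ c : C, c ≠ c'A →
        (ν {ε | f (x + δ' + (fun i => ε i * σ i) + μ) = c}).toReal ≤
          (ν {ε | f (x + δ' + (fun i => ε i * σ i) + μ) = c'A}).toReal := by
  intro δ' hδ c hc
  set g : (Fin d → ℝ) → C := fun y => f ((fun i => y i * σ i) + μ) with hg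
  have hgm : Measurable g := by
    apply hf.comp
    exact (measurable_pi_lambda _ (fun i => (measurable_pi_apply i).mul_const _)).add_const _
  have hσ0 : ∀ i, σ i ≠ 0 := fun i => (hσ i).ne'
  have key1 : ∀ (ε : Fin d → ℝ), g ((fun i => x i / σ i) + ε) = f (x + (fun i => ε i * σ i) + μ) := by
    intro ε
    simp only [hg]
    congr 1
    funext i
    simp [add_mul, div_mul_cancel₀ _ (hσ0 i), add_assoc]
  have key2 : ∀ (ε : Fin d → ℝ), g ((fun i => x i / σ i) + (fun i => δ' i / σ i) + ε)
      = f (x + δ' + (fun i => ε i * σ i) + μ) := by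
    intro ε
    simp only [hg]
    congr 1
    funext i
    simp [add_mul, div_mul_cancel₀ _ (hσ0 i), add_assoc]
  have h := hiso g hgm (fun i => x i / σ i) c'A p'A p'B hpp
    (by simpa only [key1] using hA)
    (by intro c hc'; simpa only [key1] using hB c hc')
    (fun i => δ' i / σ i) hδ c hc
  simpa only [key2] using h
end

section
/- Let d ≥ 1, let C be a finite set of classes, let p ∈ [1,∞), let ν be a probability measure on ℝ^d, and let R : ℝ × ℝ → ℝ be a certified-radius function satisfying the isotropic certification property: for every measurable classifier f' : ℝ^d → C, every x ∈ ℝ^d, every class c_A ∈ C, and all reals p_A ≥ p_B such that ℙ_{ε∼ν}(f'(x+ε) = c_A) ≥ p_A and ℙ_{ε∼ν}(f'(x+ε) = c) ≤ p_B for every c ≠ c_A, it holds that for every δ ∈ ℝ^d with ‖δ‖_p ≤ R(p_A, p_B) and every class c ≠ c_A, ℙ_{ε∼ν}(f'(x+δ+ε) = c_A) ≥ ℙ_{ε∼ν}(f'(x+δ+ε) = c). Let σ ∈ ℝ^d with σ_i > 0 for all i, let μ ∈ ℝ^d, let f : ℝ^d → C be measurable, let x ∈ ℝ^d, let c'_A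 ∈ C, and let p'_A ≥ p'_B be reals with R(p'_A, p'_B) ≥ 0 such that ℙ_{ε∼ν}(f(x + ε⊙σ + μ) = c'_A) ≥ p'_A and ℙ_{ε∼ν}(f(x + ε⊙σ + μ) = c) ≤ p'_B for every c ≠ c'_A. Then for every δ' ∈ ℝ^d with ‖δ'‖_p ≤ (min_{1≤i≤d} σ_i) · R(p'_A, p'_B) and every class c ≠ c'_A, ℙ_{ε∼ν}(f(x + δ' + ε⊙σ + μ) = c'_A) ≥ ℙ_{ε∼ν}(f(x + δ' + ε⊙σ + μ) = c). -/
open MeasureTheory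

/-! The classifier `y ↦ f (x + y ⊙ σ + μ)` is measurable, and at base point `0` it sees exactly the
anisotropic noise of the hypotheses. A perturbation `δ'` of `x` is the perturbation `δ' ⊘ σ` of
this reparametrized classifier, and `‖δ' ⊘ σ‖_p ≤ ‖δ'‖_p / min_i σ_i`, so the isotropic
certificate applies as soon as `‖δ'‖_p ≤ (min_i σ_i) · R(p'_A, p'_B)`. -/

lemma lpNorm_le_lpNorm_of_abs_le {d : ℕ} {p : ℝ} (hp : 0 < p) {a b : Fin d → ℝ}
    (h : ∀ i, |a i| ≤ |b i|) : lpNorm p a ≤ lpNorm p b :=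
  Real.rpow_le_rpow (by positivity)
    (Finset.sum_le_sum fun i _ => Real.rpow_le_rpow (abs_nonneg _) (h i) hp.le) (by positivity)

lemma lpNorm_smul {d : ℕ} {p : ℝ} (hp : 0 < p) (c : ℝ) (δ : Fin d → ℝ) :
    lpNorm p (c • δ) = |c| * lpNorm p δ := by
  simp only [_root_.lpNorm, Pi.smul_apply, smul_eq_mul, abs_mul,
    Real.mul_rpow (abs_nonneg c) (abs_nonneg _), ← Finset.mul_sum]
  rw [Real.mul_rpow (by positivity) (by positivity), ← Real.rpow_mul (abs_nonneg c),
    mul_one_div_cancel hp.ne', Real.rpow_one]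

lemma lpNorm_div_le {d : ℕ} {p : ℝ} (hp : 0 < p) {m : ℝ} (hm : 0 < m) {σ : Fin d → ℝ}
    (hσ : ∀ i, m ≤ σ i) (δ : Fin d → ℝ) :
    lpNorm p (fun i => δ i / σ i) ≤ lpNorm p δ / m :=
  calc lpNorm p (fun i => δ i / σ i) ≤ lpNorm p (m⁻¹ • δ) := by
        refine lpNorm_le_lpNorm_of_abs_le hp fun i => ?_
        rw [Pi.smul_apply, smul_eq_mul, abs_div, abs_mul, abs_inv, abs_of_pos hm,
          abs_of_pos (hm.trans_le (hσ i)), inv_mul_eq_div]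
        exact div_le_div_of_nonneg_left (abs_nonneg _) hm (hσ i)
    _ = lpNorm p δ / m := by rw [lpNorm_smul hp, abs_inv, abs_of_pos hm, inv_mul_eq_div]

lemma div_add_mul_eq_add_mul {d : ℕ} {σ : Fin d → ℝ} (hσ : ∀ i, σ i ≠ 0) (δ ε : Fin d → ℝ) :
    (fun i => (δ i / σ i + ε i) * σ i) = δ + fun i => ε i * σ i := by
  funext i
  simp only [Pi.add_apply, add_mul, div_mul_cancel₀ _ (hσ i)]

theorem anisotropic_certified_radius_min_sigma_general
    {d : ℕ} (hd : 1 ≤ d)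
    {C : Type} [MeasurableSpace C]
    (p : ℝ) (hp : 1 ≤ p)
    (ν : Measure (Fin d → ℝ))
    (R : ℝ → ℝ → ℝ)
    (hiso : ∀ f' : (Fin d → ℝ) → C, Measurable f' →
      ∀ (x : Fin d → ℝ) (cA : C) (pA pB : ℝ), pB ≤ pA →
        pA ≤ (ν {ε | f' (x + ε) = cA}).toReal →
        (∀ c : C, c ≠ cA → (ν {ε | f' (x + ε) = c}).toReal ≤ pB) →
        ∀ δ : Fin d → ℝ, lpNorm p δ ≤ R pA pB →
          ∀ c : C, c ≠ cA →
            (ν {ε | f' (x + δ + ε) = c}).toReal ≤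
              (ν {ε | f' (x + δ + ε) = cA}).toReal)
    (σ : Fin d → ℝ) (hσ : ∀ i, 0 < σ i) (μ : Fin d → ℝ)
    (f : (Fin d → ℝ) → C) (hf : Measurable f)
    (x : Fin d → ℝ) (c'A : C)
    (p'A p'B : ℝ) (hpp : p'B ≤ p'A)
    (hA : p'A ≤ (ν {ε | f (x + (fun i => ε i * σ i) + μ) = c'A}).toReal)
    (hB : ∀ c : C, c ≠ c'A →
      (ν {ε | f (x + (fun i => ε i * σ i) + μ) = c}).toReal ≤ p'B) :
    ∀ δ' : Fin d → ℝ, lpNorm p δ' ≤ (⨅ i, σ i) * R p'A p'B →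
      ∀ c : C, c ≠ c'A →
        (ν {ε | f (x + δ' + (fun i => ε i * σ i) + μ) = c}).toReal ≤
          (ν {ε | f (x + δ' + (fun i => ε i * σ i) + μ) = c'A}).toReal := by
  intro δ' hδ' c hc
  have : Nonempty (Fin d) := Fin.pos_iff_nonempty.mp hd
  have hm : 0 < ⨅ i, σ i := by
    obtain ⟨j, hj⟩ := exists_eq_ciInf_of_finite (f := σ)
    exact hj ▸ hσ j
  have hδ : lpNorm p (fun i => δ' i / σ i) ≤ R p'A p'B :=
    (lpNorm_div_le (by linarith) hm (ciInf_le (Finite.bddBelow_range σ)) δ').trans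
      ((div_le_iff₀ hm).mpr (by rwa [mul_comm]))
  have hg : Measurable fun y : Fin d → ℝ => f (x + (fun i => y i * σ i) + μ) :=
    hf.comp (by fun_prop)
  have key := hiso _ hg 0 c'A p'A p'B hpp (by simpa using hA) (by simpa using hB) _ hδ c hc
  simpa only [zero_add, Pi.add_apply, div_add_mul_eq_add_mul (fun i => (hσ i).ne'),
    add_assoc] using key

/-- Corollary: with independent anisotropic noise, robustness holds in the
`ℓ_p` ball of radius `(min_i σ_i) · R(p'_A, p'_B)`. -/
theorem anisotropic_certified_radius_min_sigma
    {d : ℕ} (hd : 1 ≤ d)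
    {C : Type} [Fintype C] [MeasurableSpace C] [MeasurableSingletonClass C]
    (p : ℝ) (hp : 1 ≤ p)
    (ν : Measure (Fin d → ℝ)) [IsProbabilityMeasure ν]
    (R : ℝ → ℝ → ℝ)
    (hiso : ∀ f' : (Fin d → ℝ) → C, Measurable f' →
      ∀ (x : Fin d → ℝ) (cA : C) (pA pB : ℝ), pB ≤ pA →
        pA ≤ (ν {ε | f' (x + ε) = cA}).toReal →
        (∀ c : C, c ≠ cA → (ν {ε | f' (x + ε) = c}).toReal ≤ pB) →
        ∀ δ : Fin d → ℝ, lpNorm p δ ≤ R pA pB →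
          ∀ c : C, c ≠ cA →
            (ν {ε | f' (x + δ + ε) = c}).toReal ≤
              (ν {ε | f' (x + δ + ε) = cA}).toReal)
    (σ : Fin d → ℝ) (hσ : ∀ i, 0 < σ i) (μ : Fin d → ℝ)
    (f : (Fin d → ℝ) → C) (hf : Measurable f)
    (x : Fin d → ℝ) (c'A : C)
    (p'A p'B : ℝ) (hpp : p'B ≤ p'A) (hR : 0 ≤ R p'A p'B)
    (hA : p'A ≤ (ν {ε | f (x + (fun i => ε i * σ i) + μ) = c'A}).toReal)
    (hB : ∀ c : C, c ≠ c'A →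
      (ν {ε | f (x + (fun i => ε i * σ i) + μ) = c}).toReal ≤ p'B) :
    ∀ δ' : Fin d → ℝ, lpNorm p δ' ≤ (⨅ i, σ i) * R p'A p'B →
      ∀ c : C, c ≠ c'A →
        (ν {ε | f (x + δ' + (fun i => ε i * σ i) + μ) = c}).toReal ≤
          (ν {ε | f (x + δ' + (fun i => ε i * σ i) + μ) = c'A}).toReal :=
  anisotropic_certified_radius_min_sigma_general hd p hp ν R hiso σ hσ μ f hf x c'A p'A p'B hpp hA
    hB
end

section
/- Let d ≥ 1, let c ∈ ℝ^d with c_i > 0 for all i, and let p ∈ ℝ^d with p_i > 0 for all i. Define the generalized super-ellipsoid E(d,p) = {(δ_1,…,δ_d) ∈ ℝ^d : Σ_{i=1}^d |δ_i/c_i|^{p_i} ≤ 1}. Then the d-dimensional Lebesgue measure of E(d,p) equals 2^d · (Π_{i=1}^d c_i Γ(1 + 1/p_i)) / Γ(1 + Σ_{i=1}^d 1/p_i). -/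
/-!
Compute `I = ∫ exp (-∑ i, |x i / c i| ^ p i) dx` in two ways. By Fubini it factors into
one-dimensional integrals `∫ exp (-|u / c| ^ q) du = 2 c Γ(1 + 1/q)`. On the other hand,
writing `exp (-F x) = ∫_{F x}^∞ exp (-t) dt` and applying Tonelli gives
`I = ∫_0^∞ exp (-t) vol {F ≤ t} dt`, and the diagonal rescaling `x i ↦ t ^ (1 / p i) x i`
shows `vol {F ≤ t} = t ^ s vol {F ≤ 1}` with `s = ∑ i, 1 / p i`, so `I = Γ(s + 1) vol {F ≤ 1}`.
-/

open MeasureTheory Real Set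

theorem integral_exp_neg_abs_rpow {q : ℝ} (hq : 0 < q) :
    ∫ u : ℝ, exp (-|u| ^ q) = 2 * Gamma (1 + 1 / q) := by
  rw [integral_comp_abs (f := fun u => exp (-u ^ q)), integral_exp_neg_rpow hq, add_comm]

theorem integral_exp_neg_abs_div_rpow (c : ℝ) {q : ℝ} (hq : 0 < q) :
    ∫ u : ℝ, exp (-|u / c| ^ q) = 2 * |c| * Gamma (1 + 1 / q) := by
  rw [Measure.integral_comp_div (fun u => exp (-|u| ^ q)), integral_exp_neg_abs_rpow hq,
    smul_eq_mul]
  ring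

theorem integral_exp_neg_sum_abs_div_rpow {ι : Type*} [Fintype ι] (c p : ι → ℝ)
    (hp : ∀ i, 0 < p i) :
    ∫ x : ι → ℝ, exp (-∑ i, |x i / c i| ^ p i) = ∏ i, 2 * |c i| * Gamma (1 + 1 / p i) := by
  simp_rw [← Finset.sum_neg_distrib, exp_sum]
  rw [integral_fintype_prod_volume_eq_prod (fun i u => exp (-|u / c i| ^ p i))]
  exact Finset.prod_congr rfl fun i _ => integral_exp_neg_abs_div_rpow (c i) (hp i)

theorem lintegral_exp_neg_sum_abs_div_rpow {ι : Type*} [Fintype ι] {c p : ι → ℝ}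
    (hc : ∀ i, c i ≠ 0) (hp : ∀ i, 0 < p i) :
    ∫⁻ x : ι → ℝ, ENNReal.ofReal (exp (-∑ i, |x i / c i| ^ p i)) =
      ENNReal.ofReal (∏ i, 2 * |c i| * Gamma (1 + 1 / p i)) := by
  have hpos : 0 < ∏ i, 2 * |c i| * Gamma (1 + 1 / p i) :=
    Finset.prod_pos fun i _ => by
      have := Gamma_pos_of_pos (by have := hp i; positivity : (0 : ℝ) < 1 + 1 / p i)
      have := abs_pos.2 (hc i)
      positivity
  rw [← integral_exp_neg_sum_abs_div_rpow c p hp, ofReal_integral_eq_lintegral_ofReal]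
  · exact .of_integral_ne_zero (by rw [integral_exp_neg_sum_abs_div_rpow c p hp]; exact hpos.ne')
  · exact Filter.Eventually.of_forall fun x => (exp_pos _).le

theorem lintegral_Ici_exp_neg (a : ℝ) :
    ∫⁻ t in Ici a, ENNReal.ofReal (exp (-t)) = ENNReal.ofReal (exp (-a)) := by
  rw [← setLIntegral_congr Ioi_ae_eq_Ici, ← integral_exp_neg_Ioi,
    ofReal_integral_eq_lintegral_ofReal]
  · exact (by simpa using exp_neg_integrableOn_Ioi a one_pos : IntegrableOn _ (Ioi a))
  · exact Filter.Eventually.of_forall fun t => (exp_pos _).le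

theorem lintegral_Ioi_exp_neg_mul_rpow {s : ℝ} (hs : -1 < s) :
    ∫⁻ t in Ioi (0 : ℝ), ENNReal.ofReal (exp (-t) * t ^ s) = ENNReal.ofReal (Gamma (s + 1)) := by
  have hs1 : 0 < s + 1 := by linarith
  rw [Gamma_eq_integral hs1, add_sub_cancel_right, ofReal_integral_eq_lintegral_ofReal]
  · exact (by simpa using GammaIntegral_convergent hs1 : IntegrableOn _ (Ioi (0 : ℝ)))
  · filter_upwards [ae_restrict_mem measurableSet_Ioi] with t (ht : 0 < t)
    positivity

theorem lintegral_exp_neg_eq_lintegral_measure_le {α : Type*} [MeasurableSpace α]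
    (μ : Measure α) [SFinite μ] {F : α → ℝ} (hF : Measurable F) :
    ∫⁻ x, ENNReal.ofReal (exp (-F x)) ∂μ =
      ∫⁻ t, ENNReal.ofReal (exp (-t)) * μ {x | F x ≤ t} := by
  set S : Set (α × ℝ) := {z | F z.1 ≤ z.2}
  have hS : MeasurableSet S := measurableSet_le (hF.comp measurable_fst) measurable_snd
  set g : α × ℝ → ENNReal := S.indicator fun z => ENNReal.ofReal (exp (-z.2))
  have hg : Measurable g :=
    ((measurable_exp.comp measurable_snd.neg).ennreal_ofReal).indicator hS
  calc ∫⁻ x, ENNReal.ofReal (exp (-F x)) ∂μ = ∫⁻ x, (∫⁻ t, g (x, t)) ∂μ := by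
        refine lintegral_congr fun x => ?_
        rw [← lintegral_Ici_exp_neg, ← lintegral_indicator measurableSet_Ici]
        rfl
    _ = ∫⁻ t, ∫⁻ x, g (x, t) ∂μ :=
        lintegral_lintegral_swap (f := fun x t => g (x, t)) hg.aemeasurable
    _ = ∫⁻ t, ENNReal.ofReal (exp (-t)) * μ {x | F x ≤ t} := by
        refine lintegral_congr fun t => ?_
        rw [← setLIntegral_const, ← lintegral_indicator (measurableSet_le hF measurable_const)]
        rfl

theorem lintegral_exp_neg_of_measure_le_eq_rpow_mul {α : Type*} [MeasurableSpace α]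
    (μ : Measure α) [SFinite μ] {F : α → ℝ} (hF : Measurable F) (hF0 : ∀ x, 0 ≤ F x)
    {s : ℝ} (hs : -1 < s)
    (hscale : ∀ t, 0 < t → μ {x | F x ≤ t} = ENNReal.ofReal (t ^ s) * μ {x | F x ≤ 1}) :
    ∫⁻ x, ENNReal.ofReal (exp (-F x)) ∂μ = ENNReal.ofReal (Gamma (s + 1)) * μ {x | F x ≤ 1} := by
  have hsupp : (fun t => ENNReal.ofReal (exp (-t)) * μ {x | F x ≤ t}).support ⊆ Ici 0 := by
    intro t ht
    by_contra hneg
    have hempty : {x | F x ≤ t} = ∅ :=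
      eq_empty_of_forall_notMem fun x hx => hneg (le_trans (hF0 x) hx)
    simp [hempty] at ht
  rw [lintegral_exp_neg_eq_lintegral_measure_le μ hF, ← setLIntegral_eq_of_support_subset hsupp,
    ← setLIntegral_congr Ioi_ae_eq_Ici, ← lintegral_Ioi_exp_neg_mul_rpow hs,
    ← lintegral_mul_const _ (by fun_prop)]
  refine setLIntegral_congr_fun measurableSet_Ioi fun t (ht : 0 < t) => ?_
  rw [hscale t ht, ENNReal.ofReal_mul (exp_pos _).le, mul_assoc]

theorem volume_setOf_sum_abs_div_rpow_le {ι : Type*} [Fintype ι] (c p : ι → ℝ)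
    (hp : ∀ i, 0 < p i) {t : ℝ} (ht : 0 < t) :
    volume {x : ι → ℝ | ∑ i, |x i / c i| ^ p i ≤ t} =
      ENNReal.ofReal (t ^ ∑ i, 1 / p i) * volume {x : ι → ℝ | ∑ i, |x i / c i| ^ p i ≤ 1} := by
  classical
  set f : (ι → ℝ) →ₗ[ℝ] (ι → ℝ) := Matrix.toLin' (Matrix.diagonal fun i => t ^ (-(1 / p i)))
  have hf : ∀ x i, f x i = t ^ (-(1 / p i)) * x i := fun x i => by
    simp [f, Matrix.mulVec_diagonal]
  have hdet : LinearMap.det f = (t ^ ∑ i, 1 / p i)⁻¹ := by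
    rw [LinearMap.det_toLin', Matrix.det_diagonal, ← rpow_sum_of_pos ht,
      Finset.sum_neg_distrib, rpow_neg ht.le]
  have hterm : ∀ x i, |f x i / c i| ^ p i = t⁻¹ * |x i / c i| ^ p i := fun x i => by
    have hexp : -(1 / p i) * p i = -1 := by field_simp [(hp i).ne']
    rw [hf, mul_div_assoc, abs_mul, abs_of_pos (rpow_pos_of_pos ht _),
      mul_rpow (rpow_pos_of_pos ht _).le (abs_nonneg _), ← rpow_mul ht.le, hexp, rpow_neg_one]
  have hpre : f ⁻¹' {x | ∑ i, |x i / c i| ^ p i ≤ 1} = {x | ∑ i, |x i / c i| ^ p i ≤ t} := by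
    ext x
    simp only [mem_preimage, mem_ofPred_eq, hterm, ← Finset.mul_sum, inv_mul_le_iff₀ ht, mul_one]
  have hdet0 : LinearMap.det f ≠ 0 := by rw [hdet]; exact (inv_pos.2 (rpow_pos_of_pos ht _)).ne'
  rw [← hpre, Measure.addHaar_preimage_linearMap volume hdet0, hdet, inv_inv,
    abs_of_pos (rpow_pos_of_pos ht _)]

theorem lebesgue_measure_generalized_superellipsoid_general
    {d : ℕ}
    (c : Fin d → ℝ) (hc : ∀ i, 0 < c i)
    (p : Fin d → ℝ) (hp : ∀ i, 0 < p i) :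
    volume {δ : Fin d → ℝ | ∑ i, |δ i / c i| ^ p i ≤ 1} =
      ENNReal.ofReal
        (2 ^ d * (∏ i, c i * Real.Gamma (1 + 1 / p i)) /
          Real.Gamma (1 + ∑ i, 1 / p i)) := by
  have hs : 0 ≤ ∑ i, 1 / p i := Finset.sum_nonneg fun i _ => one_div_nonneg.2 (hp i).le
  have hΓ : 0 < Gamma (∑ i, 1 / p i + 1) := Gamma_pos_of_pos (by linarith)
  have hlayer := lintegral_exp_neg_of_measure_le_eq_rpow_mul volume
    (by fun_prop : Measurable fun x : Fin d → ℝ => ∑ i, |x i / c i| ^ p i)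
    (fun x => Finset.sum_nonneg fun i _ => rpow_nonneg (abs_nonneg _) _) (by linarith)
    fun t ht => volume_setOf_sum_abs_div_rpow_le c p hp ht
  rw [lintegral_exp_neg_sum_abs_div_rpow (fun i => (hc i).ne') hp] at hlayer
  have hprod : ∏ i, 2 * |c i| * Gamma (1 + 1 / p i) = 2 ^ d * ∏ i, c i * Gamma (1 + 1 / p i) := by
    simp_rw [abs_of_pos (hc _), mul_assoc, Finset.prod_mul_distrib, Finset.prod_const,
      Finset.card_univ, Fintype.card_fin]
  rw [add_comm 1, ← hprod, ENNReal.ofReal_div_of_pos hΓ, hlayer, mul_comm,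
    ENNReal.mul_div_cancel_right (by simpa using hΓ) ENNReal.ofReal_ne_top]

/-- Lebesgue measure of the generalized super-ellipsoid
`E(d,p) = {δ : ∑ i |δ_i/c_i|^{p_i} ≤ 1}`. -/
theorem lebesgue_measure_generalized_superellipsoid
    {d : ℕ} (hd : 1 ≤ d)
    (c : Fin d → ℝ) (hc : ∀ i, 0 < c i)
    (p : Fin d → ℝ) (hp : ∀ i, 0 < p i) :
    volume {δ : Fin d → ℝ | ∑ i, |δ i / c i| ^ p i ≤ 1} =
      ENNReal.ofReal
        (2 ^ d * (∏ i, c i * Real.Gamma (1 + 1 / p i)) /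
          Real.Gamma (1 + ∑ i, 1 / p i)) :=
  lebesgue_measure_generalized_superellipsoid_general c hc p hp
end

section
/- Let d ≥ 1, let C be a finite set of classes, let p ∈ [1,∞), let ν be a probability measure on ℝ^d, and let R : ℝ × ℝ → ℝ be a certified-radius function satisfying the isotropic certification property: for every measurable classifier f' : ℝ^d → C, every z ∈ ℝ^d, every class c_A ∈ C, and all reals p_A ≥ p_B such that ℙ_{ε∼ν}(f'(z+ε) = c_A) ≥ p_A and ℙ_{ε∼ν}(f'(z+ε) = c) ≤ p_B for every c ≠ c_A, it holds that for every δ ∈ ℝ^d with ‖δ‖_p ≤ R(p_A, p_B) and every class c ≠ c_A, ℙ_{ε∼ν}(f'(z+δ+ε) = c_A) ≥ ℙ_{ε∼ν}(f'(z+δ+ε) = c). Let σ : ℝ^d → ℝ^d and μ : ℝ^d → ℝ^d be input-dependent noise-parameter functions with σ(x)_i > 0 for all i. Fix a clean input x ∈ ℝ^d and let Y = x + ε⊙σ(x) + μ(x), where the parameters σ(x), μ(x) are computed from the clean input x only. Let f : ℝ^d → C be measurable, let c_A ∈ C, and let p_A ≥ p_B be reals such that ℙ_{ε∼ν}(f(Y)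 = c_A) ≥ p_A and ℙ_{ε∼ν}(f(Y) = c) ≤ p_B for every c ≠ c_A. Then for every perturbation δ ∈ ℝ^d with ‖δ ⊘ σ(x)‖_p ≤ R(p_A, p_B) and every class c ≠ c_A, ℙ_{ε∼ν}(f(x + δ + ε⊙σ(x) + μ(x)) = c_A) ≥ ℙ_{ε∼ν}(f(x + δ + ε⊙σ(x) + μ(x)) = c); that is, the smoothed classifier built from the clean-input-dependent noise parameters consistently predicts c_A on x + δ. -/
open MeasureTheory

/-- Soundness of certification-wise anisotropic randomized smoothing:
the noise parameters `σ(x)`, `μ(x)` depend only on the clean input `x` and are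
kept fixed for all perturbations during certification. -/
theorem certification_wise_anisotropic_soundness
    {d : ℕ} (hd : 1 ≤ d)
    {C : Type} [Fintype C] [MeasurableSpace C] [MeasurableSingletonClass C]
    (p : ℝ) (hp : 1 ≤ p)
    (ν : Measure (Fin d → ℝ)) [IsProbabilityMeasure ν]
    (R : ℝ → ℝ → ℝ)
    (hiso : ∀ f' : (Fin d → ℝ) → C, Measurable f' →
      ∀ (z : Fin d → ℝ) (cA : C) (pA pB : ℝ), pB ≤ pA →
        pA ≤ (ν {ε | f' (z + ε) = cA}).toReal →
        (∀ c : C, c ≠ cA → (ν {ε | f' (z + ε) = c}).toReal ≤ pB) →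
        ∀ δ : Fin d → ℝ, lpNorm p δ ≤ R pA pB →
          ∀ c : C, c ≠ cA →
            (ν {ε | f' (z + δ + ε) = c}).toReal ≤
              (ν {ε | f' (z + δ + ε) = cA}).toReal)
    (σ : (Fin d → ℝ) → (Fin d → ℝ)) (μ : (Fin d → ℝ) → (Fin d → ℝ))
    (hσ : ∀ y i, 0 < σ y i)
    (x : Fin d → ℝ)
    (f : (Fin d → ℝ) → C) (hf : Measurable f)
    (cA : C) (pA pB : ℝ) (hpp : pB ≤ pA)
    (hA : pA ≤ (ν {ε | f (x + (fun i => ε i * σ x i) + μ x) = cA}).toReal)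
    (hB : ∀ c : C, c ≠ cA →
      (ν {ε | f (x + (fun i => ε i * σ x i) + μ x) = c}).toReal ≤ pB) :
    ∀ δ : Fin d → ℝ, lpNorm p (fun i => δ i / σ x i) ≤ R pA pB →
      ∀ c : C, c ≠ cA →
        (ν {ε | f (x + δ + (fun i => ε i * σ x i) + μ x) = c}).toReal ≤
          (ν {ε | f (x + δ + (fun i => ε i * σ x i) + μ x) = cA}).toReal := by
  intro δ hδ c hc
  set g : (Fin d → ℝ) → C := fun y => f (x + (fun i => y i * σ x i) + μ x) with hg
  have hgm : Measurable g := by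
    apply hf.comp
    apply Measurable.add_const
    apply Measurable.const_add
    exact measurable_pi_lambda _ fun i => ((measurable_pi_apply i).mul_const _)
  have key := hiso g hgm 0 cA pA pB hpp ?_ ?_ (fun i => δ i / σ x i) hδ c hc
  · have hfun : ∀ ε : Fin d → ℝ,
        g (0 + (fun i => δ i / σ x i) + ε) = f (x + δ + (fun i => ε i * σ x i) + μ x) := by
      intro ε
      simp only [hg]
      congr 1
      funext i
      have hne : σ x i ≠ 0 := (hσ x i).ne'
      simp only [Pi.add_apply, Pi.zero_apply]
      field_simp
      ring
    simpa only [hfun] using key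
  · have hfun : ∀ ε : Fin d → ℝ, g (0 + ε) = f (x + (fun i => ε i * σ x i) + μ x) := by
      intro ε; simp [hg]
    simpa only [hfun] using hA
  · intro c' hc'
    have hfun : ∀ ε : Fin d → ℝ, g (0 + ε) = f (x + (fun i => ε i * σ x i) + μ x) := by
      intro ε; simp [hg]
    simpa only [hfun] using hB c' hc'
end

section
/- Let d ≥ 1, let C be a finite set of classes, let p ∈ [1,∞), let ν be a probability measure on ℝ^d, and let R : ℝ → ℝ be a binary certified-radius function satisfying the isotropic binary certification property: for every measurable classifier f' : ℝ^d → C, every x ∈ ℝ^d, every class c_A ∈ C, and every real p_A > 1/2 such that ℙ_{ε∼ν}(f'(x+ε) = c_A) ≥ p_A, it holds that for every δ ∈ ℝ^d with ‖δ‖_p ≤ R(p_A) and every class c ≠ c_A, ℙ_{ε∼ν}(f'(x+δ+ε) = c_A) ≥ ℙ_{ε∼ν}(f'(x+δ+ε) = c). Let σ ∈ ℝ^d with σ_i > 0 for all i, let μ ∈ ℝ^d, let f : ℝ^d → C be measurable, let x ∈ ℝ^d, let c'_A ∈ C, and let p'_A > 1/2 satisfy ℙ_{ε∼ν}(f(x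 + ε⊙σ + μ) = c'_A) ≥ p'_A. Then for every δ' ∈ ℝ^d with ‖δ' ⊘ σ‖_p ≤ R(p'_A) and every class c ≠ c'_A, ℙ_{ε∼ν}(f(x + δ' + ε⊙σ + μ) = c'_A) ≥ ℙ_{ε∼ν}(f(x + δ' + ε⊙σ + μ) = c). -/
open MeasureTheory

/-- Binary-case universal transformation for anisotropic noise. -/
theorem anisotropic_certified_robustness_binary
    {d : ℕ} (hd : 1 ≤ d)
    {C : Type} [Fintype C] [MeasurableSpace C] [MeasurableSingletonClass C]
    (p : ℝ) (hp : 1 ≤ p)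
    (ν : Measure (Fin d → ℝ)) [IsProbabilityMeasure ν]
    (R : ℝ → ℝ)
    (hiso : ∀ f' : (Fin d → ℝ) → C, Measurable f' →
      ∀ (x : Fin d → ℝ) (cA : C) (pA : ℝ), 1 / 2 < pA →
        pA ≤ (ν {ε | f' (x + ε) = cA}).toReal →
        ∀ δ : Fin d → ℝ, lpNorm p δ ≤ R pA →
          ∀ c : C, c ≠ cA →
            (ν {ε | f' (x + δ + ε) = c}).toReal ≤
              (ν {ε | f' (x + δ + ε) = cA}).toReal)
    (σ : Fin d → ℝ) (hσ : ∀ i, 0 < σ i) (μ : Fin d → ℝ)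
    (f : (Fin d → ℝ) → C) (hf : Measurable f)
    (x : Fin d → ℝ) (c'A : C)
    (p'A : ℝ) (hp'A : 1 / 2 < p'A)
    (hA : p'A ≤ (ν {ε | f (x + (fun i => ε i * σ i) + μ) = c'A}).toReal) :
    ∀ δ' : Fin d → ℝ, lpNorm p (fun i => δ' i / σ i) ≤ R p'A →
      ∀ c : C, c ≠ c'A →
        (ν {ε | f (x + δ' + (fun i => ε i * σ i) + μ) = c}).toReal ≤
          (ν {ε | f (x + δ' + (fun i => ε i * σ i) + μ) = c'A}).toReal := by
  intro δ' hδ' c hc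
  set g : (Fin d → ℝ) → C := fun y => f (x + (fun i => y i * σ i) + μ) with hg
  have hgm : Measurable g := by
    apply hf.comp
    apply Measurable.add_const
    apply Measurable.const_add
    exact measurable_pi_lambda _ fun i => (measurable_pi_apply i).mul_const _
  have key := hiso g hgm 0 c'A p'A hp'A (by simpa using hA)
    (fun i => δ' i / σ i) hδ' c hc
  have heq : ∀ ε : Fin d → ℝ,
      g (0 + (fun i => δ' i / σ i) + ε) = f (x + δ' + (fun i => ε i * σ i) + μ) := by
    intro ε
    simp only [hg]
    congr 1
    funext i
    have : σ i ≠ 0 := (hσ i).ne'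
    simp [Pi.add_apply]
    field_simp
    ring
  simpa only [heq] using key
end

section
/- Let d ≥ 1, let C be a finite set of classes, let λ > 0, let σ ∈ ℝ^d with σ_i > 0 for all i, and let μ ∈ ℝ^d. Let ν' be the law of a random vector ε' ∈ ℝ^d whose coordinates are independent with ε'_i distributed as the Gaussian N(μ_i, (λσ_i)²). Let f : ℝ^d → C be a measurable classifier, let x ∈ ℝ^d, let c_A ∈ C, and let a > 0 be such that ℙ_{ε'∼ν'}(f(x+ε') = c_A) ≥ Φ(a), where Φ is the cumulative distribution function of the standard normal distribution N(0,1), and ℙ_{ε'∼ν'}(f(x+ε') = c) ≤ 1 − Φ(a) for every class c ≠ c_A. Then for every δ ∈ ℝ^d with ‖δ ⊘ σ‖_2 < λ·a and every class c ≠ c_A, ℙ_{ε'∼ν'}(f(x+δ+ε') = c_A) > ℙ_{ε'∼ν'}(f(x+δ+ε') = c). -/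
open MeasureTheory

noncomputable def l2Norm {d : ℕ} (δ : Fin d → ℝ) : ℝ :=
  (∑ i, δ i ^ 2) ^ ((1 : ℝ) / 2)

noncomputable def stdNormalCDF (a : ℝ) : ℝ :=
  (ProbabilityTheory.gaussianReal 0 1 (Set.Iic a)).toReal

/-!
Write `v i = (λ σ i)²`, `u i = δ i / v i` and `β = ‖δ ⊘ σ‖₂ / λ`, so that `β² = ∑ δ i ² / v i`.
Translating the product Gaussian `P = ν'` by `δ` multiplies it by the density
`ρ ε = exp (⟨u, ε - μ⟩ - β² / 2)`, an increasing function of the linear statistic `⟨u, ε⟩`.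
By the Neyman–Pearson argument, among all sets of `P`-mass at least `Φ a`, the half-space
`H = {⟨u, ε⟩ ≤ ⟨u, μ⟩ + β a}` (of `P`-mass exactly `Φ a`) loses the most mass under translation.
Since `⟨u, ε⟩` is Gaussian with variance `β²` and translation adds `β²` to it, the translated
mass of `H` is `Φ (a - β)`. Applied to the region where `f` answers `c_A`, and to the complement
of the region where it answers `c`, this gives `ℙ(c) ≤ 1 - Φ (a - β) < Φ (a - β) ≤ ℙ(c_A)`
as soon as `β < a`.
-/

open Real ProbabilityTheory
open scoped ENNReal NNReal

theorem MeasureTheory.withDensity_apply_le_of_density_threshold {α : Type*} [MeasurableSpace α]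
    {P : Measure α} [IsFiniteMeasure P] {ρ : α → ℝ≥0∞} (hρ : Measurable ρ)
    {A H : Set α} (hA : MeasurableSet A) (hH : MeasurableSet H) {r : ℝ≥0∞}
    (hle : ∀ x ∈ H, ρ x ≤ r) (hge : ∀ x ∉ H, r ≤ ρ x) (hPHA : P H ≤ P A) :
    P.withDensity ρ H ≤ P.withDensity ρ A := by
  have hdiff : P (H \ A) ≤ P (A \ H) := by
    rw [← measure_inter_add_sdiff H hA, ← measure_inter_add_sdiff A hH, Set.inter_comm] at hPHA
    exact (ENNReal.add_le_add_iff_left (measure_ne_top P _)).mp hPHA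
  rw [← measure_inter_add_sdiff H hA, ← measure_inter_add_sdiff A hH, Set.inter_comm]
  refine add_le_add_right ?_ _
  calc P.withDensity ρ (H \ A) ≤ ∫⁻ _ in H \ A, r ∂P := by
        rw [withDensity_apply _ (hH.diff hA)]
        exact setLIntegral_mono measurable_const fun x hx => hle x hx.1
    _ = r * P (H \ A) := setLIntegral_const _ _
    _ ≤ r * P (A \ H) := by gcongr
    _ = ∫⁻ _ in A \ H, r ∂P := (setLIntegral_const _ _).symm
    _ ≤ P.withDensity ρ (A \ H) := by
        rw [withDensity_apply _ (hA.diff hH)]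
        exact setLIntegral_mono hρ fun x hx => hge x hx.2

theorem MeasureTheory.Measure.pi_withDensity {ι α : Type*} [Fintype ι] [MeasurableSpace α]
    (μ : ι → Measure α) [∀ i, IsProbabilityMeasure (μ i)] {ρ : ι → α → ℝ≥0∞}
    (hρ : ∀ i, Measurable (ρ i)) [∀ i, SigmaFinite ((μ i).withDensity (ρ i))] :
    (Measure.pi μ).withDensity (fun x => ∏ i, ρ i (x i)) =
      Measure.pi fun i => (μ i).withDensity (ρ i) := by
  refine (Measure.pi_eq fun s hs => ?_).symm
  have hind : (Set.univ.pi s).indicator (fun x => ∏ i, ρ i (x i)) =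
      fun x => ∏ i, (s i).indicator (ρ i) (x i) := by
    ext x
    by_cases h : ∀ i, x i ∈ s i
    · rw [Set.indicator_of_mem (Set.mem_univ_pi.mpr h)]
      exact Finset.prod_congr rfl fun i _ => (Set.indicator_of_mem (h i) _).symm
    · obtain ⟨i, hi⟩ := not_forall.mp h
      rw [Set.indicator_of_notMem (mt Set.mem_univ_pi.mp h)]
      exact (Finset.prod_eq_zero (Finset.mem_univ i) (Set.indicator_of_notMem hi _)).symm
  rw [withDensity_apply _ (.univ_pi hs), ← lintegral_indicator (.univ_pi hs), hind,
    lintegral_prod_eq_prod_lintegral_of_indepFun Finset.univ _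
      (iIndepFun_pi fun i => ((hρ i).indicator (hs i)).aemeasurable)
      fun i => ((hρ i).indicator (hs i)).comp (measurable_pi_apply i)]
  refine Finset.prod_congr rfl fun i _ => ?_
  rw [withDensity_apply _ (hs i), ← lintegral_indicator (hs i)]
  exact (measurePreserving_eval μ i).lintegral_comp ((hρ i).indicator (hs i))

namespace ProbabilityTheory

theorem gaussianReal_withDensity_exp (m δ : ℝ) {v : ℝ≥0} (hv : v ≠ 0) :
    (gaussianReal m v).withDensity
        (fun t => ENNReal.ofReal (exp (δ / v * (t - m) - δ ^ 2 / (2 * v)))) =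
      gaussianReal (m + δ) v := by
  have hv' : (v : ℝ) ≠ 0 := NNReal.coe_ne_zero.mpr hv
  rw [gaussianReal_of_var_ne_zero _ hv, gaussianReal_of_var_ne_zero _ hv, ← withDensity_mul _
    (measurable_gaussianPDF _ _) (by fun_prop)]
  congr 1
  ext t
  rw [Pi.mul_apply, gaussianPDF, gaussianPDF, ← ENNReal.ofReal_mul (gaussianPDFReal_nonneg _ _ _),
    gaussianPDFReal, gaussianPDFReal, mul_assoc, ← exp_add]
  congr 3
  field_simp
  ring

theorem pi_gaussianReal_map_const_add {ι : Type*} [Fintype ι] (m δ : ι → ℝ) (v : ι → ℝ≥0) :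
    (Measure.pi fun i => gaussianReal (m i) (v i)).map (δ + ·) =
      Measure.pi fun i => gaussianReal (m i + δ i) (v i) := by
  simp_rw [← gaussianReal_map_const_add]
  exact Measure.pi_map_pi (f := fun i t => δ i + t) fun i => by fun_prop

theorem pi_gaussianReal_map_sum_mul {ι : Type*} [Fintype ι] (m : ι → ℝ) (v : ι → ℝ≥0)
    (u : ι → ℝ) :
    (Measure.pi fun i => gaussianReal (m i) (v i)).map (fun ε => ∑ i, u i * ε i) =
      gaussianReal (∑ i, u i * m i) (∑ i, (u i ^ 2).toNNReal * v i) := by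
  refine Measure.ext_of_charFun (funext fun s => ?_)
  have hexp (ε : ι → ℝ) : Complex.exp (s * (∑ i, u i * ε i : ℝ) * Complex.I) =
      ∏ i, Complex.exp ((s * u i : ℝ) * ε i * Complex.I) := by
    rw [← Complex.exp_sum]
    push_cast
    simp only [Finset.mul_sum, Finset.sum_mul, mul_assoc]
  rw [charFun_apply_real, integral_map
    (by fun_prop : Measurable fun ε : ι → ℝ => ∑ i, u i * ε i).aemeasurable (by fun_prop)]
  simp_rw [hexp]
  rw [integral_fintype_prod_eq_prod
    (f := fun i (t : ℝ) => Complex.exp ((s * u i : ℝ) * t * Complex.I))]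
  simp_rw [← charFun_apply_real, charFun_gaussianReal, ← Complex.exp_sum]
  congr 1
  push_cast [Real.coe_toNNReal _ (sq_nonneg _)]
  simp only [Finset.mul_sum, Finset.sum_mul, Finset.sum_div, ← Finset.sum_sub_distrib]
  exact Finset.sum_congr rfl fun i _ => by ring

theorem gaussianReal_Iic_add_mul (m c : ℝ) {s : ℝ} (hs : 0 < s) :
    gaussianReal m (s ^ 2).toNNReal (Set.Iic (m + s * c)) = gaussianReal 0 1 (Set.Iic c) := by
  have hmap : (gaussianReal 0 1).map (fun z => m + s * z) = gaussianReal m (s ^ 2).toNNReal := by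
    change (gaussianReal 0 1).map ((m + ·) ∘ (s * ·)) = _
    rw [← Measure.map_map (by fun_prop) (by fun_prop), gaussianReal_map_const_mul,
      gaussianReal_map_const_add]
    congr 1
    · ring
    · ext; simp [sq_nonneg]
  rw [← hmap, Measure.map_apply (by fun_prop) measurableSet_Iic]
  congr 1
  ext z
  simp [hs]

theorem pi_gaussianReal_map_const_add_eq_withDensity {ι : Type*} [Fintype ι] (m δ : ι → ℝ)
    {v : ι → ℝ≥0} (hv : ∀ i, v i ≠ 0) :
    (Measure.pi fun i => gaussianReal (m i) (v i)).map (δ + ·) =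
      (Measure.pi fun i => gaussianReal (m i) (v i)).withDensity fun ε => ENNReal.ofReal
        (exp (∑ i, δ i / v i * ε i - ∑ i, δ i / v i * m i - (∑ i, δ i ^ 2 / v i) / 2)) := by
  set ρ : ι → ℝ → ℝ≥0∞ := fun i t =>
    ENNReal.ofReal (exp (δ i / v i * (t - m i) - δ i ^ 2 / (2 * v i)))
  have hρ i : (gaussianReal (m i) (v i)).withDensity (ρ i) = gaussianReal (m i + δ i) (v i) :=
    gaussianReal_withDensity_exp _ _ (hv i)
  have (i : ι) : SigmaFinite ((gaussianReal (m i) (v i)).withDensity (ρ i)) := by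
    rw [hρ]; infer_instance
  have hprod : (fun ε : ι → ℝ => ∏ i, ρ i (ε i)) = fun ε => ENNReal.ofReal
      (exp (∑ i, δ i / v i * ε i - ∑ i, δ i / v i * m i - (∑ i, δ i ^ 2 / v i) / 2)) := by
    funext ε
    rw [← ENNReal.ofReal_prod_of_nonneg fun i _ => (exp_pos _).le, ← exp_sum]
    simp only [mul_sub, Finset.sum_sub_distrib, Finset.sum_div]
    congr 4 with i
    ring
  rw [pi_gaussianReal_map_const_add, ← hprod, Measure.pi_withDensity _ fun i => by fun_prop]
  simp_rw [hρ]

theorem pi_gaussianReal_setOf_sum_mul_le {ι : Type*} [Fintype ι] (m : ι → ℝ) (v : ι → ℝ≥0)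
    (u : ι → ℝ) {β : ℝ} (hβ : 0 < β) (hβu : ∑ i, u i ^ 2 * v i = β ^ 2) (c : ℝ) :
    (Measure.pi fun i => gaussianReal (m i) (v i))
        {ε | ∑ i, u i * ε i ≤ ∑ i, u i * m i + β * c} = gaussianReal 0 1 (Set.Iic c) := by
  have hvar : ∑ i, (u i ^ 2).toNNReal * v i = (β ^ 2).toNNReal := by
    have : 0 ≤ ∑ i, u i ^ 2 * v i := hβu ▸ sq_nonneg β
    ext
    simp [sq_nonneg, ← hβu, this]
  rw [show {ε : ι → ℝ | ∑ i, u i * ε i ≤ _} = (fun ε => ∑ i, u i * ε i) ⁻¹' Set.Iic _ from rfl,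
    ← Measure.map_apply (by fun_prop) measurableSet_Iic, pi_gaussianReal_map_sum_mul, hvar,
    gaussianReal_Iic_add_mul _ _ hβ]

end ProbabilityTheory

theorem stdNormalCDF_strictMono : StrictMono stdNormalCDF := by
  intro x y hxy
  have hpos : gaussianReal 0 1 (Set.Ioc x y) ≠ 0 := fun h =>
    hxy.not_ge (by simpa using gaussianReal_absolutelyContinuous' 0 one_ne_zero h)
  have hsplit : gaussianReal 0 1 (Set.Iic y) =
      gaussianReal 0 1 (Set.Iic x) + gaussianReal 0 1 (Set.Ioc x y) := by
    rw [← measure_union (Set.Iic_disjoint_Ioc le_rfl) measurableSet_Ioc,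
      Set.Iic_union_Ioc_eq_Iic hxy.le]
  unfold stdNormalCDF
  rw [hsplit, ENNReal.toReal_add (measure_ne_top _ _) (measure_ne_top _ _)]
  exact lt_add_of_pos_right _ (ENNReal.toReal_pos hpos (measure_ne_top _ _))

theorem one_sub_stdNormalCDF_le_neg (c : ℝ) : 1 - stdNormalCDF c ≤ stdNormalCDF (-c) := by
  have hsymm : gaussianReal 0 1 (Set.Ioi c) = gaussianReal 0 1 (Set.Iio (-c)) := by
    have hneg : (gaussianReal 0 1).map (fun x => -x) = gaussianReal 0 1 := by
      simpa using gaussianReal_map_neg (μ := 0) (v := 1)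
    conv_lhs => rw [← hneg]
    rw [Measure.map_apply measurable_neg measurableSet_Ioi]
    congr 1
    ext z
    simp
  unfold stdNormalCDF
  rw [← ENNReal.toReal_one, ← ENNReal.toReal_sub_of_le prob_le_one ENNReal.one_ne_top,
    ← prob_compl_eq_one_sub measurableSet_Iic, Set.compl_Iic, hsymm]
  exact ENNReal.toReal_mono (measure_ne_top _ _) (measure_mono Set.Iio_subset_Iic_self)

theorem one_sub_stdNormalCDF_lt_self {z : ℝ} (hz : 0 < z) : 1 - stdNormalCDF z < stdNormalCDF z :=
  (one_sub_stdNormalCDF_le_neg z).trans_lt (stdNormalCDF_strictMono (by linarith))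

section GaussianShift

variable {ι : Type*} [Fintype ι] (m : ι → ℝ) {v : ι → ℝ≥0} (δ : ι → ℝ) {S : Set (ι → ℝ)}
  {a : ℝ}

theorem stdNormalCDF_sub_le_pi_gaussianReal_preimage_add (hv : ∀ i, v i ≠ 0) (hS : MeasurableSet S)
    (h : stdNormalCDF a ≤ ((Measure.pi fun i => gaussianReal (m i) (v i)) S).toReal) :
    stdNormalCDF (a - √(∑ i, δ i ^ 2 / v i)) ≤
      ((Measure.pi fun i => gaussianReal (m i) (v i)) ((δ + ·) ⁻¹' S)).toReal := by
  obtain rfl | hδ := eq_or_ne δ 0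
  · simpa using h
  have hQ := pi_gaussianReal_map_const_add_eq_withDensity m δ hv
  set P := Measure.pi fun i => gaussianReal (m i) (v i)
  set T : (ι → ℝ) → ℝ := fun ε => ∑ i, δ i / v i * ε i
  set V := ∑ i, δ i ^ 2 / v i
  have hv' i : (0 : ℝ) < v i := by have := hv i; positivity
  have hV : 0 < V := by
    obtain ⟨i, hi⟩ := Function.ne_iff.mp hδ
    exact Finset.sum_pos' (fun i _ => by positivity)
      ⟨i, Finset.mem_univ i, div_pos (sq_pos_of_ne_zero hi) (hv' i)⟩
  set β := √V
  have hβ : 0 < β := sqrt_pos.mpr hV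
  have hβV : β ^ 2 = V := sq_sqrt hV.le
  have hβu : ∑ i, (δ i / v i) ^ 2 * v i = β ^ 2 :=
    hβV ▸ Finset.sum_congr rfl fun i _ => by field_simp [(hv' i).ne']
  have hT_add ε : T (δ + ε) = β ^ 2 + T ε := by
    simp only [T, Pi.add_apply, mul_add, Finset.sum_add_distrib, hβV, V]
    congr 1
    exact Finset.sum_congr rfl fun i _ => by field_simp [(hv' i).ne']
  set H := {ε | T ε ≤ T m + β * a}
  have hHmeas : MeasurableSet H := (by fun_prop : Measurable T) measurableSet_Iic
  have hPH : P H = gaussianReal 0 1 (Set.Iic a) :=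
    pi_gaussianReal_setOf_sum_mul_le m v _ hβ hβu a
  have hQH : P ((δ + ·) ⁻¹' H) = gaussianReal 0 1 (Set.Iic (a - β)) := by
    have hpre : (δ + ·) ⁻¹' H = {ε | T ε ≤ T m + β * (a - β)} := by
      ext ε
      simp only [H, Set.mem_preimage, Set.mem_ofPred_eq, hT_add]
      constructor <;> intro h <;> linarith
    rw [hpre]
    exact pi_gaussianReal_setOf_sum_mul_le m v _ hβ hβu (a - β)
  have hNP : P.map (δ + ·) H ≤ P.map (δ + ·) S := by
    rw [hQ]
    refine withDensity_apply_le_of_density_threshold (by fun_prop) hS hHmeas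
      (r := ENNReal.ofReal (exp (β * a - V / 2))) (fun ε hε => ?_) (fun ε hε => ?_) ?_
    · simp only [H, Set.mem_ofPred_eq] at hε
      exact ENNReal.ofReal_le_ofReal (exp_le_exp.mpr (by linarith))
    · simp only [H, Set.mem_ofPred_eq, not_le] at hε
      exact ENNReal.ofReal_le_ofReal (exp_le_exp.mpr (by linarith))
    · rw [hPH]
      exact (ENNReal.toReal_le_toReal (measure_ne_top _ _) (measure_ne_top _ _)).mp h
  rw [Measure.map_apply (by fun_prop) hHmeas, Measure.map_apply (by fun_prop) hS, hQH] at hNP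
  exact ENNReal.toReal_mono (measure_ne_top _ _) hNP

theorem pi_gaussianReal_preimage_add_le_one_sub_stdNormalCDF (hv : ∀ i, v i ≠ 0)
    (hS : MeasurableSet S)
    (h : ((Measure.pi fun i => gaussianReal (m i) (v i)) S).toReal ≤ 1 - stdNormalCDF a) :
    ((Measure.pi fun i => gaussianReal (m i) (v i)) ((δ + ·) ⁻¹' S)).toReal ≤
      1 - stdNormalCDF (a - √(∑ i, δ i ^ 2 / v i)) := by
  have hcompl := stdNormalCDF_sub_le_pi_gaussianReal_preimage_add m δ hv hS.compl (a := a)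
    (by rw [← measureReal_def, probReal_compl_eq_one_sub hS, measureReal_def]; linarith)
  rw [Set.preimage_compl, ← measureReal_def,
    probReal_compl_eq_one_sub (hS.preimage (measurable_const_add δ)), measureReal_def] at hcompl
  linarith

end GaussianShift

theorem sqrt_sum_sq_div_mul_sq_eq_l2Norm_div {d : ℕ} (δ : Fin d → ℝ) {σ : Fin d → ℝ}
    (hσ : ∀ i, σ i ≠ 0) {lam : ℝ} (hlam : 0 < lam) :
    √(∑ i, δ i ^ 2 / (lam * σ i) ^ 2) = l2Norm (fun i => δ i / σ i) / lam := by
  have hsum : ∑ i, δ i ^ 2 / (lam * σ i) ^ 2 = (∑ i, (δ i / σ i) ^ 2) / lam ^ 2 := by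
    rw [Finset.sum_div]
    exact Finset.sum_congr rfl fun i _ => by field_simp [hσ i]
  rw [hsum, sqrt_div' _ (sq_nonneg lam), sqrt_sq hlam.le, l2Norm, sqrt_eq_rpow]

theorem gaussian_anisotropic_certified_robustness_general
    {d : ℕ}
    {C : Type} [MeasurableSpace C] [MeasurableSingletonClass C]
    (lam : ℝ) (hlam : 0 < lam)
    (σ : Fin d → ℝ) (hσ : ∀ i, 0 < σ i) (μ : Fin d → ℝ)
    (ν' : Measure (Fin d → ℝ))
    (hν' : ν' = Measure.pi fun i : Fin d =>
      ProbabilityTheory.gaussianReal (μ i) ⟨(lam * σ i) ^ 2, sq_nonneg _⟩)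
    (f : (Fin d → ℝ) → C) (hf : Measurable f)
    (x : Fin d → ℝ) (cA : C) (a : ℝ)
    (hA : stdNormalCDF a ≤ (ν' {ε' | f (x + ε') = cA}).toReal)
    (hB : ∀ c : C, c ≠ cA →
      (ν' {ε' | f (x + ε') = c}).toReal ≤ 1 - stdNormalCDF a) :
    ∀ δ : Fin d → ℝ, l2Norm (fun i => δ i / σ i) < lam * a →
      ∀ c : C, c ≠ cA →
        (ν' {ε' | f (x + δ + ε') = c}).toReal <
          (ν' {ε' | f (x + δ + ε') = cA}).toReal := by
  intro δ hδ c hc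
  set v : Fin d → ℝ≥0 := fun i => ⟨(lam * σ i) ^ 2, sq_nonneg _⟩
  have hv i : v i ≠ 0 := by
    rw [← NNReal.coe_ne_zero]
    exact pow_ne_zero 2 (mul_pos hlam (hσ i)).ne'
  have hβ : √(∑ i, δ i ^ 2 / v i) = l2Norm (fun i => δ i / σ i) / lam :=
    sqrt_sum_sq_div_mul_sq_eq_l2Norm_div δ (fun i => (hσ i).ne') hlam
  have hpre c' : {ε' | f (x + δ + ε') = c'} = (δ + ·) ⁻¹' {ε | f (x + ε) = c'} := by
    ext ε
    simp [add_assoc]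
  have hmeas c' : MeasurableSet {ε | f (x + ε) = c'} :=
    (hf.comp (measurable_const_add x)) (measurableSet_singleton c')
  subst hν'
  have hlow := stdNormalCDF_sub_le_pi_gaussianReal_preimage_add μ δ hv (hmeas cA) hA
  have hup := pi_gaussianReal_preimage_add_le_one_sub_stdNormalCDF μ δ hv (hmeas c) (hB c hc)
  have hmargin : 0 < a - l2Norm (fun i => δ i / σ i) / lam := by
    rw [sub_pos, div_lt_iff₀ hlam]
    linarith
  rw [hβ] at hlow hup
  rw [hpre, hpre]
  linarith [one_sub_stdNormalCDF_lt_self hmargin]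

/-- Certified robustness with independent anisotropic Gaussian noise
`ε'_i ∼ N(μ_i, (λσ_i)²)`: robustness is guaranteed for `‖δ ⊘ σ‖_2 < λ·a`. -/
theorem gaussian_anisotropic_certified_robustness
    {d : ℕ} (hd : 1 ≤ d)
    {C : Type} [Fintype C] [MeasurableSpace C] [MeasurableSingletonClass C]
    (lam : ℝ) (hlam : 0 < lam)
    (σ : Fin d → ℝ) (hσ : ∀ i, 0 < σ i) (μ : Fin d → ℝ)
    (ν' : Measure (Fin d → ℝ))
    (hν' : ν' = Measure.pi fun i : Fin d =>
      ProbabilityTheory.gaussianReal (μ i) ⟨(lam * σ i) ^ 2, sq_nonneg _⟩)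
    (f : (Fin d → ℝ) → C) (hf : Measurable f)
    (x : Fin d → ℝ) (cA : C) (a : ℝ) (ha : 0 < a)
    (hA : stdNormalCDF a ≤ (ν' {ε' | f (x + ε') = cA}).toReal)
    (hB : ∀ c : C, c ≠ cA →
      (ν' {ε' | f (x + ε') = c}).toReal ≤ 1 - stdNormalCDF a) :
    ∀ δ : Fin d → ℝ, l2Norm (fun i => δ i / σ i) < lam * a →
      ∀ c : C, c ≠ cA →
        (ν' {ε' | f (x + δ + ε') = c}).toReal <
          (ν' {ε' | f (x + δ + ε') = cA}).toReal :=
  gaussian_anisotropic_certified_robustness_general lam hlam σ hσ μ ν' hν' f hf x cA a hA hB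
end

section
/- Let d ≥ 1, let C be a finite set of classes, let λ > 0, and let ν be the uniform probability measure on the cube [−λ, λ]^d (normalized Lebesgue measure restricted to the cube). Let f : ℝ^d → C be a measurable classifier, let x ∈ ℝ^d, let c_A ∈ C, and let p_A ∈ (1/2, 1] be such that ℙ_{ε∼ν}(f(x+ε) = c_A) ≥ p_A and ℙ_{ε∼ν}(f(x+ε) = c) ≤ 1 − p_A for every class c ≠ c_A. Then for every δ ∈ ℝ^d with ‖δ‖_1 < 2λ(p_A − 1/2) and every class c ≠ c_A, ℙ_{ε∼ν}(f(x+δ+ε) = c_A) > ℙ_{ε∼ν}(f(x+δ+ε) = c). -/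
/-! Shifting the input by `δ` replaces the uniform law on the cube `Q` by the uniform law on
the translated cube `Q + δ`. Two uniform laws on sets of equal volume differ on any event by at
most the mass that one of them puts outside the other set; for the two cubes this is
`1 - ∏ i, (1 - |δ i| / 2λ) ≤ ‖δ‖₁ / 2λ < p_A - 1/2`. Hence after the shift `c_A` still has
probability above `1/2` and every other class probability below `1/2`. -/

open MeasureTheory ProbabilityTheory Set

theorem Finset.one_sub_sum_le_prod_one_sub {ι R : Type*} [CommRing R] [LinearOrder R]
    [IsStrictOrderedRing R] (s : Finset ι) {a : ι → R} (h0 : ∀ i ∈ s, 0 ≤ a i)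
    (h1 : ∀ i ∈ s, a i ≤ 1) : 1 - ∑ i ∈ s, a i ≤ ∏ i ∈ s, (1 - a i) := by
  classical
  induction s using Finset.induction with
  | empty => simp
  | insert j s hj ih =>
    rw [Finset.sum_insert hj, Finset.prod_insert hj]
    have hs : ∀ i ∈ s, 0 ≤ a i := fun i hi => h0 i (Finset.mem_insert_of_mem hi)
    have ih := ih hs fun i hi => h1 i (Finset.mem_insert_of_mem hi)
    have hsum : 0 ≤ ∑ i ∈ s, a i := Finset.sum_nonneg hs
    nlinarith [h0 j (Finset.mem_insert_self j s), h1 j (Finset.mem_insert_self j s)]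

namespace ProbabilityTheory

variable {Ω : Type*} [MeasurableSpace Ω] {μ : Measure Ω} {Q R : Set Ω}

theorem cond_le_cond_add_cond_compl (hQ : MeasurableSet Q) (hR : MeasurableSet R)
    (hμ : μ Q = μ R) (S : Set Ω) : μ[S | R] ≤ μ[S | Q] + μ[Qᶜ | R] := by
  rw [cond_apply hR, cond_apply hQ, cond_apply hR, hμ, ← mul_add]
  gcongr
  calc μ (R ∩ S) ≤ μ (R ∩ S ∩ Q) + μ ((R ∩ S) \ Q) := measure_le_inter_add_sdiff μ _ _
    _ ≤ μ (Q ∩ S) + μ (R ∩ Qᶜ) :=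
      add_le_add (measure_mono fun y hy => ⟨hy.2, hy.1.2⟩)
        (measure_mono fun y hy => ⟨hy.1.1, hy.2⟩)

theorem toReal_cond_le_toReal_cond_add (hQ : MeasurableSet Q) (hR : MeasurableSet R)
    (hμ : μ Q = μ R) (S : Set Ω) :
    (μ[S | R]).toReal ≤ (μ[S | Q]).toReal + (μ[Qᶜ | R]).toReal :=
  ENNReal.toReal_le_add (cond_le_cond_add_cond_compl hQ hR hμ S) (measure_ne_top _ _)
    (measure_ne_top _ _)

theorem cond_compl_comm (hQ : MeasurableSet Q) (hR : MeasurableSet R) (hμ : μ Q = μ R)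
    (hfin : μ Q ≠ ⊤) : μ[Qᶜ | R] = μ[Rᶜ | Q] := by
  rw [cond_apply hR, cond_apply hQ, hμ, ← sdiff_eq, ← sdiff_eq,
    measure_sdiff_symm hR.nullMeasurableSet hQ.nullMeasurableSet hμ.symm
      (measure_ne_top_of_subset inter_subset_right hfin)]

theorem cond_preimage_const_add {G : Type*} [MeasurableSpace G] [AddGroup G] [MeasurableAdd G]
    {μ : Measure G} [μ.IsAddLeftInvariant] {Q : Set G} (hQ : MeasurableSet Q) (δ : G)
    (S : Set G) : μ[(δ + ·) ⁻¹' S | Q] = μ[S | (-δ + ·) ⁻¹' Q] := by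
  have hpre : Q ∩ (δ + ·) ⁻¹' S = (δ + ·) ⁻¹' ((-δ + ·) ⁻¹' Q ∩ S) := by
    ext y; simp
  rw [cond_apply hQ, cond_apply (hQ.preimage (measurable_const_add _)), hpre,
    measure_preimage_add, measure_preimage_add]

end ProbabilityTheory

namespace Real

variable {ι : Type*} [Fintype ι]

theorem volume_Icc_neg (w : ι → ℝ) :
    volume (Icc (-w) w) = ∏ i, ENNReal.ofReal (2 * w i) := by
  simp only [volume_Icc_pi, Pi.neg_apply]
  congr 1; funext i; ring_nf

theorem volume_Icc_neg_inter_Icc_add (w δ : ι → ℝ) :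
    volume (Icc (-w) w ∩ Icc (-w + δ) (w + δ)) = ∏ i, ENNReal.ofReal (2 * w i - |δ i|) := by
  rw [Icc_inter_Icc, volume_Icc_pi]
  congr 1; funext i
  congr 1
  simp only [Pi.inf_apply, Pi.sup_apply, Pi.neg_apply, Pi.add_apply]
  rcases le_total 0 (δ i) with h | h
  · rw [abs_of_nonneg h, min_eq_left (by linarith), max_eq_right (by linarith)]; ring
  · rw [abs_of_nonpos h, min_eq_right (by linarith), max_eq_left (by linarith)]; ring

theorem volume_cond_Icc_neg_Icc_add_toReal {w δ : ι → ℝ} (hw : ∀ i, 0 < w i)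
    (hδ : ∀ i, |δ i| ≤ 2 * w i) :
    (volume[Icc (-w + δ) (w + δ) | Icc (-w) w]).toReal = ∏ i, (1 - |δ i| / (2 * w i)) := by
  rw [cond_apply measurableSet_Icc, ENNReal.toReal_mul, ENNReal.toReal_inv,
    volume_Icc_neg_inter_Icc_add, volume_Icc_neg, ENNReal.toReal_prod, ENNReal.toReal_prod,
    inv_mul_eq_div, ← Finset.prod_div_distrib]
  refine Finset.prod_congr rfl fun i _ => ?_
  have hwi := hw i
  rw [ENNReal.toReal_ofReal (by linarith [hδ i]), ENNReal.toReal_ofReal (by linarith)]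
  field_simp

theorem volume_cond_Icc_neg_compl_Icc_add_toReal_le {w δ : ι → ℝ} (hw : ∀ i, 0 < w i)
    (hδ : ∀ i, |δ i| ≤ 2 * w i) :
    (volume[(Icc (-w + δ) (w + δ))ᶜ | Icc (-w) w]).toReal ≤ ∑ i, |δ i| / (2 * w i) := by
  have : IsProbabilityMeasure (volume[|Icc (-w) w]) := by
    refine cond_isProbabilityMeasure_of_finite ?_ measure_Icc_lt_top.ne
    rw [volume_Icc_neg]
    exact Finset.prod_ne_zero_iff.2 fun i _ => (ENNReal.ofReal_pos.2 (by linarith [hw i])).ne'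
  rw [← measureReal_def, probReal_compl_eq_one_sub measurableSet_Icc, measureReal_def,
    volume_cond_Icc_neg_Icc_add_toReal hw hδ]
  have := Finset.one_sub_sum_le_prod_one_sub Finset.univ (a := fun i => |δ i| / (2 * w i))
    (fun i _ => by have := hw i; positivity)
    (fun i _ => (div_le_one (by linarith [hw i])).2 (hδ i))
  linarith

end Real

theorem uniform_isotropic_certified_robustness_l1_general
    {d : ℕ}
    {C : Type}
    (lam : ℝ) (hlam : 0 < lam)
    (ν : Measure (Fin d → ℝ))
    (hν : ν = (volume (Set.univ.pi fun _ : Fin d => Set.Icc (-lam) lam))⁻¹ •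
      volume.restrict (Set.univ.pi fun _ : Fin d => Set.Icc (-lam) lam))
    (f : (Fin d → ℝ) → C)
    (x : Fin d → ℝ) (cA : C) (pA : ℝ) (hpA' : pA ≤ 1)
    (hA : pA ≤ (ν {ε | f (x + ε) = cA}).toReal)
    (hB : ∀ c : C, c ≠ cA → (ν {ε | f (x + ε) = c}).toReal ≤ 1 - pA) :
    ∀ δ : Fin d → ℝ, (∑ i, |δ i|) < 2 * lam * (pA - 1 / 2) →
      ∀ c : C, c ≠ cA →
        (ν {ε | f (x + δ + ε) = c}).toReal <
          (ν {ε | f (x + δ + ε) = cA}).toReal := by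
  intro δ hδ c hc
  set w : Fin d → ℝ := fun _ => lam
  set Q := Icc (-w) w
  set R := Icc (-w + δ) (w + δ)
  have hνQ : ν = volume[|Q] := by rw [hν, pi_univ_Icc]; rfl
  have hRQ : (-δ + ·) ⁻¹' Q = R := by simp only [Q, R, preimage_const_add_Icc, sub_neg_eq_add]
  have hQR : volume Q = volume R := by rw [← hRQ, measure_preimage_add]
  have hδw : ∀ i, |δ i| ≤ 2 * w i := fun i => by
    have := Finset.single_le_sum (fun j _ => abs_nonneg (δ j)) (Finset.mem_univ i)
    nlinarith
  have hR_out : (volume[Rᶜ | Q]).toReal < pA - 1 / 2 := by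
    refine (Real.volume_cond_Icc_neg_compl_Icc_add_toReal_le (fun _ => hlam) hδw).trans_lt ?_
    rw [← Finset.sum_div, div_lt_iff₀ (by positivity)]
    linarith
  have hQ_out : (volume[Qᶜ | R]).toReal < pA - 1 / 2 := by
    rwa [cond_compl_comm measurableSet_Icc measurableSet_Icc hQR measure_Icc_lt_top.ne]
  have hshift (c' : C) : {ε | f (x + δ + ε) = c'} = (δ + ·) ⁻¹' {ε | f (x + ε) = c'} := by
    ext ε; simp [add_assoc]
  subst hνQ
  rw [hshift, hshift, cond_preimage_const_add measurableSet_Icc,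
    cond_preimage_const_add measurableSet_Icc, hRQ]
  linarith [hB c hc, toReal_cond_le_toReal_cond_add measurableSet_Icc measurableSet_Icc hQR
    {ε | f (x + ε) = c}, toReal_cond_le_toReal_cond_add measurableSet_Icc measurableSet_Icc
    hQR.symm {ε | f (x + ε) = cA}]

/-- Certified robustness against `ℓ_1` perturbations with isotropic uniform noise
on the cube `[−λ, λ]^d`: the certified radius is `2λ(p_A − 1/2)`. -/
theorem uniform_isotropic_certified_robustness_l1
    {d : ℕ} (hd : 1 ≤ d)
    {C : Type} [Fintype C] [MeasurableSpace C] [MeasurableSingletonClass C]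
    (lam : ℝ) (hlam : 0 < lam)
    (ν : Measure (Fin d → ℝ))
    (hν : ν = (volume (Set.univ.pi fun _ : Fin d => Set.Icc (-lam) lam))⁻¹ •
      volume.restrict (Set.univ.pi fun _ : Fin d => Set.Icc (-lam) lam))
    (f : (Fin d → ℝ) → C) (hf : Measurable f)
    (x : Fin d → ℝ) (cA : C) (pA : ℝ) (hpA : 1 / 2 < pA) (hpA' : pA ≤ 1)
    (hA : pA ≤ (ν {ε | f (x + ε) = cA}).toReal)
    (hB : ∀ c : C, c ≠ cA → (ν {ε | f (x + ε) = c}).toReal ≤ 1 - pA) :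
    ∀ δ : Fin d → ℝ, (∑ i, |δ i|) < 2 * lam * (pA - 1 / 2) →
      ∀ c : C, c ≠ cA →
        (ν {ε | f (x + δ + ε) = c}).toReal <
          (ν {ε | f (x + δ + ε) = cA}).toReal :=
  uniform_isotropic_certified_robustness_l1_general lam hlam ν hν f x cA pA hpA' hA hB
end

section
/- Let d ≥ 1, let C be a finite set of classes, let λ > 0, and let ν be the uniform probability measure on the cube [−λ, λ]^d (normalized Lebesgue measure restricted to the cube). Let f : ℝ^d → C be a measurable classifier, let x ∈ ℝ^d, let c_A ∈ C, and let p_A ∈ (1/2, 1] be such that ℙ_{ε∼ν}(f(x+ε) = c_A) ≥ p_A and ℙ_{ε∼ν}(f(x+ε) = c) ≤ 1 − p_A for every class c ≠ c_A. Then for every δ ∈ ℝ^d with ‖δ‖_∞ < 2λ(1 − (3/2 − p_A)^{1/d}) and every class c ≠ c_A, ℙ_{ε∼ν}(f(x+δ+ε) = c_A) > ℙ_{ε∼ν}(f(x+δ+ε) = c). -/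
open MeasureTheory

lemma cube_volume_aux {d : ℕ} (lam : ℝ) (hlam : 0 < lam) :
    volume (Set.univ.pi fun _ : Fin d => Set.Icc (-lam) lam)
      = ENNReal.ofReal ((2 * lam) ^ d) := by
  rw [volume_pi_pi]
  simp only [Real.volume_Icc, sub_neg_eq_add, Finset.prod_const, Finset.card_univ,
    Fintype.card_fin]
  rw [← ENNReal.ofReal_pow (by positivity)]
  congr 1
  ring

lemma key_shift_aux {d : ℕ} (lam : ℝ) (hlam : 0 < lam) (δ : Fin d → ℝ)
    (hδ : ∀ i, |δ i| ≤ 2 * lam)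
    (A : Set (Fin d → ℝ)) (hA : MeasurableSet A) (x : Fin d → ℝ) :
    (volume ({ε | x + ε ∈ A} ∩ Set.univ.pi fun _ : Fin d => Set.Icc (-lam) lam)).toReal ≤
      (volume ({ε | x + δ + ε ∈ A} ∩ Set.univ.pi fun _ : Fin d => Set.Icc (-lam) lam)).toReal
        + ((2 * lam) ^ d - ∏ i, (2 * lam - |δ i|)) := by
  set Q : Set (Fin d → ℝ) := Set.univ.pi fun _ : Fin d => Set.Icc (-lam) lam with hQdef
  have hQm : MeasurableSet Q := MeasurableSet.univ_pi fun i => measurableSet_Icc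
  set Q' : Set (Fin d → ℝ) := (fun ε => δ + ε) ⁻¹' Q with hQ'def
  have hQ'm : MeasurableSet Q' := hQm.preimage (measurable_const_add δ)
  have hQ'eq : Q' = Set.univ.pi fun i => Set.Icc (-lam - δ i) (lam - δ i) := by
    ext ε
    simp only [hQ'def, Set.mem_preimage, hQdef, Set.mem_pi, Set.mem_univ, true_implies,
      Set.mem_Icc, Pi.add_apply]
    refine forall_congr' fun i => ?_
    constructor <;> intro h <;> constructor <;> linarith [h.1, h.2]
  have hQQ' : Q ∩ Q' = Set.univ.pi fun i =>
      Set.Icc (max (-lam) (-lam - δ i)) (min lam (lam - δ i)) := by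
    rw [hQ'eq, hQdef, ← Set.pi_inter_distrib]
    exact congrArg Set.univ.pi (funext fun i => Set.Icc_inter_Icc)
  have hlen : ∀ i : Fin d,
      min lam (lam - δ i) - max (-lam) (-lam - δ i) = 2 * lam - |δ i| := by
    intro i
    rcases le_total 0 (δ i) with h | h
    · rw [abs_of_nonneg h, min_eq_right (by linarith), max_eq_left (by linarith)]
      ring
    · rw [abs_of_nonpos h, min_eq_left (by linarith), max_eq_right (by linarith)]
      ring
  have hW : volume (Q ∩ Q') = ∏ i, ENNReal.ofReal (2 * lam - |δ i|) := by
    rw [hQQ', volume_pi_pi]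
    refine Finset.prod_congr rfl fun i _ => ?_
    rw [Real.volume_Icc, hlen i]
  -- volumes of Q and Q'
  have hQvol : volume Q = ENNReal.ofReal ((2 * lam) ^ d) := cube_volume_aux lam hlam
  have hQ'vol : volume Q' = volume Q := by
    rw [hQ'def]
    exact measure_preimage_add volume δ Q
  set S : Set (Fin d → ℝ) := {ε | x + ε ∈ A} with hSdef
  set S' : Set (Fin d → ℝ) := {ε | x + δ + ε ∈ A} with hS'def
  have hSm : MeasurableSet S := hA.preimage (measurable_const_add x)
  have hS'm : MeasurableSet S' := hA.preimage (measurable_const_add (x + δ))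
  have hS'Q' : S' ∩ Q' = (fun ε => δ + ε) ⁻¹' (S ∩ Q) := by
    ext ε
    simp only [hS'def, hSdef, hQ'def, Set.mem_inter_iff, Set.mem_preimage, Set.mem_setOf_eq]
    rw [add_assoc]
  have hvolSQ : volume (S ∩ Q) = volume (S' ∩ Q') := by
    rw [hS'Q', measure_preimage_add]
  have hincl : S' ∩ Q' ⊆ (S' ∩ Q) ∪ (Q' \ Q) := by
    rintro ε ⟨h1, h2⟩
    by_cases hq : ε ∈ Q
    · exact Or.inl ⟨h1, hq⟩
    · exact Or.inr ⟨h2, hq⟩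
  have hmain : volume (S ∩ Q) ≤ volume (S' ∩ Q) + volume (Q' \ Q) := by
    rw [hvolSQ]
    exact le_trans (measure_mono hincl) (measure_union_le _ _)
  have hdiff : volume (Q' \ Q) = volume Q' - volume (Q ∩ Q') := by
    rw [← Set.diff_inter_self_eq_diff]
    exact measure_diff Set.inter_subset_right ((hQm.inter hQ'm)).nullMeasurableSet
      (lt_of_le_of_lt (measure_mono Set.inter_subset_right)
        (by rw [hQ'vol, hQvol]; exact ENNReal.ofReal_lt_top)).ne
  have hWle : volume (Q ∩ Q') ≤ volume Q' := measure_mono Set.inter_subset_right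
  have hQfin : volume Q ≠ ⊤ := by rw [hQvol]; exact ENNReal.ofReal_ne_top
  have hQ'fin : volume Q' ≠ ⊤ := by rw [hQ'vol]; exact hQfin
  have hSQfin : volume (S ∩ Q) ≠ ⊤ :=
    (lt_of_le_of_lt (measure_mono Set.inter_subset_right) hQfin.lt_top).ne
  have hS'Qfin : volume (S' ∩ Q) ≠ ⊤ :=
    (lt_of_le_of_lt (measure_mono Set.inter_subset_right) hQfin.lt_top).ne
  have hdifffin : volume (Q' \ Q) ≠ ⊤ :=
    (lt_of_le_of_lt (measure_mono Set.diff_subset) hQ'fin.lt_top).ne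
  have htr : (volume (S ∩ Q)).toReal ≤ (volume (S' ∩ Q)).toReal + (volume (Q' \ Q)).toReal := by
    rw [← ENNReal.toReal_add hS'Qfin hdifffin]
    exact ENNReal.toReal_mono (ENNReal.add_ne_top.mpr ⟨hS'Qfin, hdifffin⟩) hmain
  have hdiffReal : (volume (Q' \ Q)).toReal = (2 * lam) ^ d - ∏ i, (2 * lam - |δ i|) := by
    rw [hdiff, ENNReal.toReal_sub_of_le hWle hQ'fin, hQ'vol, hQvol, hW,
      ENNReal.toReal_ofReal (by positivity)]
    congr 1
    rw [ENNReal.toReal_prod]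
    refine Finset.prod_congr rfl fun i _ => ?_
    rw [ENNReal.toReal_ofReal (by linarith [hδ i])]
  linarith [htr, hdiffReal.le, hdiffReal.ge]

/-- Certified robustness against `ℓ_∞` perturbations with isotropic uniform noise
on the cube `[−λ, λ]^d`: the certified radius is `2λ(1 − (3/2 − p_A)^{1/d})`. -/
theorem uniform_isotropic_certified_robustness_linf
    {d : ℕ} (hd : 1 ≤ d)
    {C : Type} [Fintype C] [MeasurableSpace C] [MeasurableSingletonClass C]
    (lam : ℝ) (hlam : 0 < lam)
    (ν : Measure (Fin d → ℝ))
    (hν : ν = (volume (Set.univ.pi fun _ : Fin d => Set.Icc (-lam) lam))⁻¹ •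
      volume.restrict (Set.univ.pi fun _ : Fin d => Set.Icc (-lam) lam))
    (f : (Fin d → ℝ) → C) (hf : Measurable f)
    (x : Fin d → ℝ) (cA : C) (pA : ℝ) (hpA : 1 / 2 < pA) (hpA' : pA ≤ 1)
    (hA : pA ≤ (ν {ε | f (x + ε) = cA}).toReal)
    (hB : ∀ c : C, c ≠ cA → (ν {ε | f (x + ε) = c}).toReal ≤ 1 - pA) :
    ∀ δ : Fin d → ℝ,
      (⨆ i, |δ i|) < 2 * lam * (1 - (3 / 2 - pA) ^ ((1 : ℝ) / d)) →
      ∀ c : C, c ≠ cA →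
        (ν {ε | f (x + δ + ε) = c}).toReal <
          (ν {ε | f (x + δ + ε) = cA}).toReal := by
  intro δ hδ c hc
  haveI : Nonempty (Fin d) := ⟨⟨0, hd⟩⟩
  set Q : Set (Fin d → ℝ) := Set.univ.pi fun _ : Fin d => Set.Icc (-lam) lam with hQdef
  have hQm : MeasurableSet Q := MeasurableSet.univ_pi fun i => measurableSet_Icc
  set Vr : ℝ := (2 * lam) ^ d with hVrdef
  have hVr : 0 < Vr := by positivity
  have hQvol : volume Q = ENNReal.ofReal Vr := cube_volume_aux lam hlam
  set t : ℝ := 3 / 2 - pA with htdef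
  have ht0 : 0 < t := by rw [htdef]; linarith
  have ht1 : t < 1 := by rw [htdef]; linarith
  have hrt0 : 0 < t ^ ((1 : ℝ) / d) := Real.rpow_pos_of_pos ht0 _
  -- per-coordinate bound
  have hsup : ∀ i, |δ i| < 2 * lam * (1 - t ^ ((1 : ℝ) / d)) := fun i =>
    lt_of_le_of_lt (le_ciSup (f := fun j => |δ j|) (Set.Finite.bddAbove (Set.finite_range _)) i) hδ
  have hδle : ∀ i, |δ i| ≤ 2 * lam := by
    intro i
    have := hsup i
    nlinarith [hrt0.le, abs_nonneg (δ i)]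
  set Wr : ℝ := ∏ i, (2 * lam - |δ i|) with hWrdef
  have hdne : (d : ℝ) ≠ 0 := Nat.cast_ne_zero.mpr (by omega)
  have hprodconst : (t ^ ((1 : ℝ) / d) * (2 * lam)) ^ d = t * Vr := by
    rw [mul_pow, hVrdef, ← Real.rpow_natCast (t ^ ((1 : ℝ) / d)) d,
      ← Real.rpow_mul ht0.le, one_div, inv_mul_cancel₀ hdne, Real.rpow_one]
  have hWgt : t * Vr < Wr := by
    have hcp : (t ^ ((1 : ℝ) / d) * (2 * lam)) ^ d
        = ∏ _i : Fin d, (t ^ ((1 : ℝ) / d) * (2 * lam)) := by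
      simp
    rw [← hprodconst, hWrdef, hcp]
    refine Finset.prod_lt_prod_of_nonempty (fun i _ => by positivity) (fun i _ => ?_)
      Finset.univ_nonempty
    have := hsup i
    nlinarith
  -- ν evaluation
  have hνval : ∀ S : Set (Fin d → ℝ), MeasurableSet S →
      (ν S).toReal = (volume (S ∩ Q)).toReal / Vr := by
    intro S hS
    rw [hν, Measure.smul_apply, smul_eq_mul, Measure.restrict_apply hS,
      ENNReal.toReal_mul, ENNReal.toReal_inv, hQvol,
      ENNReal.toReal_ofReal hVr.le]
    rw [div_eq_inv_mul]
  set A : Set (Fin d → ℝ) := f ⁻¹' {c} with hAdef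
  set AA : Set (Fin d → ℝ) := f ⁻¹' {cA} with hAAdef
  have hAm : MeasurableSet A := hf (measurableSet_singleton c)
  have hAAm : MeasurableSet AA := hf (measurableSet_singleton cA)
  have hset : ∀ (y : Fin d → ℝ) (B : Set (Fin d → ℝ)) (c' : C), B = f ⁻¹' {c'} →
      {ε | f (y + ε) = c'} = {ε | y + ε ∈ B} := by
    intro y B c' hB
    rw [hB]; rfl
  have hSm : ∀ (y : Fin d → ℝ) (B : Set (Fin d → ℝ)), MeasurableSet B →
      MeasurableSet {ε : Fin d → ℝ | y + ε ∈ B} := fun y B hB =>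
    hB.preimage (measurable_const_add y)
  -- key estimates
  have hkey1 := key_shift_aux lam hlam δ hδle AA hAAm x
  have hkey2 : (volume ({ε | x + δ + ε ∈ A} ∩ Q)).toReal ≤
      (volume ({ε | x + ε ∈ A} ∩ Q)).toReal + (Vr - Wr) := by
    have h := key_shift_aux lam hlam (-δ) (fun i => by
      simpa using hδle i) A hAm (x + δ)
    have hxx : x + δ + -δ = x := by abel
    rw [hxx] at h
    simp only [Pi.neg_apply, abs_neg] at h
    exact h
  -- translate hypotheses
  rw [hset x AA cA hAAdef, hνval _ (hSm x AA hAAm)] at hA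
  have hBc := hB c hc
  rw [hset x A c hAdef, hνval _ (hSm x A hAm)] at hBc
  rw [hset (x + δ) A c hAdef, hνval _ (hSm (x + δ) A hAm),
    hset (x + δ) AA cA hAAdef, hνval _ (hSm (x + δ) AA hAAm)]
  -- final arithmetic
  rw [← hQdef, ← hVrdef, ← hWrdef] at hkey1
  clear_value t Vr Wr
  rw [div_lt_div_iff_of_pos_right hVr]
  have h1 : pA * Vr ≤ (volume ({ε | x + ε ∈ AA} ∩ Q)).toReal := by
    rw [le_div_iff₀ hVr] at hA; exact hA
  have h2 : (volume ({ε | x + ε ∈ A} ∩ Q)).toReal ≤ (1 - pA) * Vr := by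
    rw [div_le_iff₀ hVr] at hBc; exact hBc
  have hD : Vr - Wr < pA * Vr - 1 / 2 * Vr := by
    have hx : t * Vr = 3 / 2 * Vr - pA * Vr := by rw [htdef]; ring
    linarith
  have e1 : (1 - pA) * Vr = Vr - pA * Vr := by ring
  linarith [hkey1, hkey2, h1, h2, hD, e1]
end

section
/- Let d ≥ 1, let C be a finite set of classes, let λ > 0, let σ ∈ ℝ^d with σ_i > 0 for all i, and let μ ∈ ℝ^d. Let ν' be the law of a random vector ε' ∈ ℝ^d whose coordinates are independent with ε'_i uniformly distributed on the interval [μ_i − λσ_i, μ_i + λσ_i]. Let f : ℝ^d → C be a measurable classifier, let x ∈ ℝ^d, let c_A ∈ C, and let p_A ∈ (1/2, 1] be such that ℙ_{ε'∼ν'}(f(x+ε') = c_A) ≥ p_A and ℙ_{ε'∼ν'}(f(x+ε') = c) ≤ 1 − p_A for every class c ≠ c_A. Then for every δ ∈ ℝ^d with ‖δ ⊘ σ‖_1 < 2λ(p_A − 1/2) and every class c ≠ c_A, ℙ_{ε'∼ν'}(f(x+δ+ε') = c_A) > ℙ_{ε'∼ν'}(f(x+δ+ε') = c). -/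
open MeasureTheory Measure ProbabilityTheory Set

/-!
Translating a product of uniform distributions by `δ` leaves it unchanged on the product of the
overlaps of the coordinate intervals; by the union bound the complement of that box has mass at
most `∑ |δ i| / (2λσ_i) = ‖δ ⊘ σ‖₁ / (2λ)`. So the probability of every event moves by less than
`p_A - 1/2`, which cannot close the gap between `c_A` and any other class.
-/

section Overlap

variable {α : Type*} [MeasurableSpace α] {μ ν : Measure α} {S : Set α}

theorem measure_le_add_measure_compl_of_restrict_eq (h : μ.restrict S = ν.restrict S)
    (hS : MeasurableSet S) (s : Set α) : μ s ≤ ν s + μ Sᶜ :=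
  calc μ s ≤ μ (s ∩ S) + μ (s \ S) := measure_le_inter_add_sdiff μ s S
    _ = ν (s ∩ S) + μ (s \ S) := by rw [← restrict_apply' hS, h, restrict_apply' hS]
    _ ≤ ν s + μ Sᶜ := add_le_add (measure_mono inter_subset_left) (measure_mono fun _ hx => hx.2)

theorem abs_toReal_sub_le_of_restrict_eq [IsProbabilityMeasure μ] [IsProbabilityMeasure ν]
    (h : μ.restrict S = ν.restrict S) (hS : MeasurableSet S) (s : Set α) :
    |(μ s).toReal - (ν s).toReal| ≤ (μ Sᶜ).toReal := by
  have hcompl : ν Sᶜ = μ Sᶜ := by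
    have hS_eq := congr_arg (· univ) h
    simp only [restrict_apply_univ] at hS_eq
    rw [prob_compl_eq_one_sub hS, prob_compl_eq_one_sub hS, hS_eq]
  have hle := measure_le_add_measure_compl_of_restrict_eq h hS s
  have hge := measure_le_add_measure_compl_of_restrict_eq h.symm hS s
  rw [hcompl] at hge
  rw [abs_sub_le_iff, sub_le_iff_le_add', sub_le_iff_le_add']
  constructor
  · rw [← ENNReal.toReal_add (measure_ne_top _ _) (measure_ne_top _ _)]
    exact ENNReal.toReal_mono (by finiteness) hle
  · rw [← ENNReal.toReal_add (measure_ne_top _ _) (measure_ne_top _ _)]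
    exact ENNReal.toReal_mono (by finiteness) hge

theorem ProbabilityTheory.cond_restrict_inter_eq {s t : Set α} (hs : MeasurableSet s)
    (ht : MeasurableSet t) (hst : μ s = μ t) :
    μ[|s].restrict (s ∩ t) = μ[|t].restrict (s ∩ t) := by
  rw [ProbabilityTheory.cond, ProbabilityTheory.cond, restrict_smul, restrict_smul,
    restrict_restrict (hs.inter ht), restrict_restrict (hs.inter ht),
    inter_eq_left.2 inter_subset_left, inter_eq_left.2 inter_subset_right, hst]

end Overlap

theorem MeasureTheory.MeasurePreserving.cond_preimage {α β : Type*} [MeasurableSpace α]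
    [MeasurableSpace β] {μ : Measure α} {ν : Measure β} {f : α → β}
    (hf : MeasurePreserving f μ ν) {s : Set β} (hs : MeasurableSet s) :
    MeasurePreserving f μ[|f ⁻¹' s] ν[|s] := by
  refine ⟨hf.measurable, ?_⟩
  rw [ProbabilityTheory.cond, ProbabilityTheory.cond, Measure.map_smul,
    ← restrict_map hf.measurable hs, hf.map_eq, hf.measure_preimage hs.nullMeasurableSet]

theorem MeasureTheory.Measure.pi_compl_univ_pi_le_sum {ι : Type*} [Fintype ι] {α : ι → Type*}
    [∀ i, MeasurableSpace (α i)] (μ : ∀ i, Measure (α i)) [∀ i, IsProbabilityMeasure (μ i)]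
    {J : ∀ i, Set (α i)} (hJ : ∀ i, MeasurableSet (J i)) :
    Measure.pi μ (univ.pi J)ᶜ ≤ ∑ i, μ i (J i)ᶜ :=
  calc Measure.pi μ (univ.pi J)ᶜ = Measure.pi μ (⋃ i, Function.eval i ⁻¹' (J i)ᶜ) := by
        congr 1; ext x; simp
    _ ≤ ∑ i, Measure.pi μ (Function.eval i ⁻¹' (J i)ᶜ) := measure_iUnion_fintype_le _ _
    _ = ∑ i, μ i (J i)ᶜ := Finset.sum_congr rfl fun i _ =>
        (measurePreserving_eval μ i).measure_preimage (hJ i).compl.nullMeasurableSet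

theorem Real.volume_Icc_diff_Icc_add_le (a b c : ℝ) :
    volume (Icc a b \ Icc (a + c) (b + c)) ≤ ENNReal.ofReal |c| := by
  rcases le_total 0 c with hc | hc
  · calc volume (Icc a b \ Icc (a + c) (b + c)) ≤ volume (Icc a (a + c)) :=
          measure_mono fun x ⟨⟨hax, hxb⟩, hx⟩ => ⟨hax, not_lt.1 fun h => hx ⟨h.le, by linarith⟩⟩
      _ = ENNReal.ofReal |c| := by rw [Real.volume_Icc, abs_of_nonneg hc, add_sub_cancel_left]
  · calc volume (Icc a b \ Icc (a + c) (b + c)) ≤ volume (Icc (b + c) b) :=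
          measure_mono fun x ⟨⟨hax, hxb⟩, hx⟩ => ⟨not_lt.1 fun h => hx ⟨by linarith, h.le⟩, hxb⟩
      _ = ENNReal.ofReal |c| := by rw [Real.volume_Icc, abs_of_nonpos hc, sub_add_cancel_left]

section UniformIcc

variable {a b : ℝ}

theorem isProbabilityMeasure_cond_Icc (hab : a < b) : IsProbabilityMeasure volume[|Icc a b] :=
  cond_isProbabilityMeasure_of_finite (by simp [hab]) (by simp)

theorem cond_Icc_compl_inter_Icc_add_le (hab : a < b) (c : ℝ) :
    volume[|Icc a b] (Icc a b ∩ Icc (a + c) (b + c))ᶜ ≤ ENNReal.ofReal (|c| / (b - a)) := by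
  rw [cond_apply measurableSet_Icc, ← sdiff_eq, sdiff_self_inter, Real.volume_Icc,
    ENNReal.ofReal_div_of_pos (sub_pos.2 hab), ENNReal.div_eq_inv_mul]
  gcongr
  exact Real.volume_Icc_diff_Icc_add_le a b c

end UniformIcc

section PiUniformIcc

variable {ι : Type*} [Fintype ι]

theorem pi_cond_Icc_preimage_add (a b δ : ι → ℝ) (s : Set (ι → ℝ)) :
    Measure.pi (fun i => volume[|Icc (a i) (b i)]) ((δ + ·) ⁻¹' s) =
      Measure.pi (fun i => volume[|Icc (a i + δ i) (b i + δ i)]) s := by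
  have hshift := measurePreserving_pi _ _ fun i =>
    (measurePreserving_add_left volume (δ i)).cond_preimage
      (measurableSet_Icc (a := a i + δ i) (b := b i + δ i))
  simp only [preimage_const_add_Icc, add_sub_cancel_right] at hshift
  exact hshift.measure_preimage_equiv (f := MeasurableEquiv.addLeft δ) s

theorem abs_toReal_pi_cond_Icc_sub_pi_cond_Icc_add_le {a b : ι → ℝ} (hab : ∀ i, a i < b i)
    (δ : ι → ℝ) (s : Set (ι → ℝ)) :
    |(Measure.pi (fun i => volume[|Icc (a i) (b i)]) s).toReal -
        (Measure.pi (fun i => volume[|Icc (a i + δ i) (b i + δ i)]) s).toReal| ≤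
      ∑ i, |δ i| / (b i - a i) := by
  have := fun i => isProbabilityMeasure_cond_Icc (hab i)
  have := fun i => isProbabilityMeasure_cond_Icc (add_lt_add_left (hab i) (δ i))
  set J := fun i => Icc (a i) (b i) ∩ Icc (a i + δ i) (b i + δ i)
  have hJ : ∀ i, MeasurableSet (J i) := fun i => measurableSet_Icc.inter measurableSet_Icc
  have hrestrict : (Measure.pi fun i => volume[|Icc (a i) (b i)]).restrict (univ.pi J) =
      (Measure.pi fun i => volume[|Icc (a i + δ i) (b i + δ i)]).restrict (univ.pi J) := by
    rw [Measure.restrict_pi_pi, Measure.restrict_pi_pi]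
    congr 1
    funext i
    exact cond_restrict_inter_eq measurableSet_Icc measurableSet_Icc (by simp [Real.volume_Icc])
  have hterm_nonneg : ∀ i ∈ Finset.univ, 0 ≤ |δ i| / (b i - a i) :=
    fun i _ => div_nonneg (abs_nonneg _) (sub_pos.2 (hab i)).le
  have hcompl : Measure.pi (fun i => volume[|Icc (a i) (b i)]) (univ.pi J)ᶜ ≤
      ENNReal.ofReal (∑ i, |δ i| / (b i - a i)) := by
    rw [ENNReal.ofReal_sum_of_nonneg hterm_nonneg]
    exact (Measure.pi_compl_univ_pi_le_sum _ hJ).trans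
      (Finset.sum_le_sum fun i _ => cond_Icc_compl_inter_Icc_add_le (hab i) (δ i))
  exact (abs_toReal_sub_le_of_restrict_eq hrestrict (MeasurableSet.univ_pi hJ) s).trans
    (ENNReal.toReal_le_of_le_ofReal (Finset.sum_nonneg hterm_nonneg) hcompl)

end PiUniformIcc

theorem uniform_anisotropic_certified_robustness_l1_general
    {d : ℕ}
    {C : Type}
    (lam : ℝ) (hlam : 0 < lam)
    (σ : Fin d → ℝ) (hσ : ∀ i, 0 < σ i) (μ : Fin d → ℝ)
    (ν' : Measure (Fin d → ℝ))
    (hν' : ν' = Measure.pi fun i : Fin d =>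
      (volume (Set.Icc (μ i - lam * σ i) (μ i + lam * σ i)))⁻¹ •
        volume.restrict (Set.Icc (μ i - lam * σ i) (μ i + lam * σ i)))
    (f : (Fin d → ℝ) → C)
    (x : Fin d → ℝ) (cA : C) (pA : ℝ)
    (hA : pA ≤ (ν' {ε' | f (x + ε') = cA}).toReal)
    (hB : ∀ c : C, c ≠ cA → (ν' {ε' | f (x + ε') = c}).toReal ≤ 1 - pA) :
    ∀ δ : Fin d → ℝ, (∑ i, |δ i / σ i|) < 2 * lam * (pA - 1 / 2) →
      ∀ c : C, c ≠ cA →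
        (ν' {ε' | f (x + δ + ε') = c}).toReal <
          (ν' {ε' | f (x + δ + ε') = cA}).toReal := by
  intro δ hδ c hc
  change ν' = Measure.pi fun i => volume[|Icc (μ i - lam * σ i) (μ i + lam * σ i)] at hν'
  have hshift : ∀ c', ν' {ε' | f (x + δ + ε') = c'} = Measure.pi (fun i =>
      volume[|Icc (μ i - lam * σ i + δ i) (μ i + lam * σ i + δ i)]) {ε' | f (x + ε') = c'} := by
    intro c'
    rw [hν', ← pi_cond_Icc_preimage_add]
    simp only [preimage_ofPred_eq, add_assoc]
  have hclose := abs_toReal_pi_cond_Icc_sub_pi_cond_Icc_add_le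
    (a := fun i => μ i - lam * σ i) (b := fun i => μ i + lam * σ i)
    (fun i => by linarith [mul_pos hlam (hσ i)]) δ
  have hδ_small : ∑ i, |δ i| / (μ i + lam * σ i - (μ i - lam * σ i)) < pA - 1 / 2 :=
    calc ∑ i, |δ i| / (μ i + lam * σ i - (μ i - lam * σ i)) = (∑ i, |δ i / σ i|) / (2 * lam) := by
          rw [Finset.sum_div]
          refine Finset.sum_congr rfl fun i _ => ?_
          rw [abs_div, abs_of_pos (hσ i), div_div]
          ring_nf
      _ < pA - 1 / 2 := by rw [div_lt_iff₀ (by positivity)]; linarith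
  have hcA := abs_le.1 (hclose {ε' | f (x + ε') = cA})
  have hc' := abs_le.1 (hclose {ε' | f (x + ε') = c})
  rw [hν'] at hA hB
  rw [hshift, hshift]
  linarith [hB c hc]

/-- Certified robustness against `ℓ_1` perturbations with independent anisotropic
uniform noise, `ε'_i` uniform on `[μ_i − λσ_i, μ_i + λσ_i]`: robustness is
guaranteed for `‖δ ⊘ σ‖_1 < 2λ(p_A − 1/2)`. -/
theorem uniform_anisotropic_certified_robustness_l1
    {d : ℕ} (hd : 1 ≤ d)
    {C : Type} [Fintype C] [MeasurableSpace C] [MeasurableSingletonClass C]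
    (lam : ℝ) (hlam : 0 < lam)
    (σ : Fin d → ℝ) (hσ : ∀ i, 0 < σ i) (μ : Fin d → ℝ)
    (ν' : Measure (Fin d → ℝ))
    (hν' : ν' = Measure.pi fun i : Fin d =>
      (volume (Set.Icc (μ i - lam * σ i) (μ i + lam * σ i)))⁻¹ •
        volume.restrict (Set.Icc (μ i - lam * σ i) (μ i + lam * σ i)))
    (f : (Fin d → ℝ) → C) (hf : Measurable f)
    (x : Fin d → ℝ) (cA : C) (pA : ℝ) (hpA : 1 / 2 < pA) (hpA' : pA ≤ 1)
    (hA : pA ≤ (ν' {ε' | f (x + ε') = cA}).toReal)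
    (hB : ∀ c : C, c ≠ cA → (ν' {ε' | f (x + ε') = c}).toReal ≤ 1 - pA) :
    ∀ δ : Fin d → ℝ, (∑ i, |δ i / σ i|) < 2 * lam * (pA - 1 / 2) →
      ∀ c : C, c ≠ cA →
        (ν' {ε' | f (x + δ + ε') = c}).toReal <
          (ν' {ε' | f (x + δ + ε') = cA}).toReal :=
  uniform_anisotropic_certified_robustness_l1_general lam hlam σ hσ μ ν' hν' f x cA pA hA hB
end

section
/- Let d ≥ 1, let C be a finite set of classes, let λ > 0, and let ν be the law of a random vector ε ∈ ℝ^d whose d coordinates are independent, each with the Laplace distribution of scale λ, i.e., with probability density t ↦ (2λ)⁻¹ exp(−|t|/λ) with respect to Lebesgue measure on ℝ. Let f : ℝ^d → C be a measurable classifier, let x ∈ ℝ^d, let c_A ∈ C, and let p_A ∈ (1/2, 1) be such that ℙ_{ε∼ν}(f(x+ε) = c_A) ≥ p_A and ℙ_{ε∼ν}(f(x+ε) = c) ≤ 1 − p_A for every class c ≠ c_A. Then for every δ ∈ ℝ^d with ‖δ‖_1 < −λ·log(2(1 − p_A)) and every class c ≠ c_A, ℙ_{ε∼ν}(f(x+δ+ε)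 = c_A) > ℙ_{ε∼ν}(f(x+δ+ε) = c). -/
/-!
The Laplace density `ρ` satisfies `ρ (t - s) ≤ exp (|s| / λ) * ρ t` by the triangle inequality,
so multiplying over coordinates, the noise law shifted by `δ` is dominated by
`exp (‖δ‖₁ / λ)` times the unshifted law. Hence after the shift the classifier leaves `cA` with
probability at most `exp (‖δ‖₁ / λ) * (1 - pA)`, which is `< 1 / 2` exactly when
`‖δ‖₁ < -λ log (2 (1 - pA))`; so `cA` keeps more than half of the mass and beats every other class.
-/

open MeasureTheory Real Set
open scoped ENNReal NNReal

namespace MeasureTheory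

theorem lintegral_fin_nat_prod_eq_prod {n : ℕ} {E : Type*} [MeasurableSpace E]
    {μ : Fin n → Measure E} [∀ i, SigmaFinite (μ i)] {f : Fin n → E → ℝ≥0∞}
    (hf : ∀ i, Measurable (f i)) :
    ∫⁻ x, ∏ i, f i (x i) ∂Measure.pi μ = ∏ i, ∫⁻ t, f i t ∂μ i := by
  induction n with
  | zero => simp
  | succ n ih =>
    rw [← ((measurePreserving_piFinSuccAbove μ 0).symm).lintegral_comp_emb
      (MeasurableEquiv.measurableEmbedding _)]
    simp_rw [MeasurableEquiv.piFinSuccAbove_symm_apply, Fin.insertNthEquiv,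
      Fin.prod_univ_succ, Fin.insertNth_zero]
    simp only [Equiv.coe_fn_mk, Fin.cons_zero, Fin.cons_succ, Fin.zero_succAbove, cast_eq]
    have hg : Measurable fun y : Fin n → E => ∏ j, f j.succ (y j) :=
      Finset.measurable_prod _ fun j _ => (hf j.succ).comp (measurable_pi_apply j)
    rw [lintegral_prod_mul (hf 0).aemeasurable hg.aemeasurable, ih fun j => hf j.succ]

theorem lintegral_fintype_prod_eq_prod {ι : Type*} [Fintype ι] {E : Type*} [MeasurableSpace E]
    {μ : ι → Measure E} [∀ i, SigmaFinite (μ i)] {f : ι → E → ℝ≥0∞}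
    (hf : ∀ i, Measurable (f i)) :
    ∫⁻ x, ∏ i, f i (x i) ∂Measure.pi μ = ∏ i, ∫⁻ t, f i t ∂μ i := by
  let e := (Fintype.equivFin ι).symm
  rw [← (measurePreserving_piCongrLeft (fun _ => μ _) e).lintegral_comp_emb
    (MeasurableEquiv.measurableEmbedding _)]
  simp_rw [← e.prod_comp, MeasurableEquiv.coe_piCongrLeft, Equiv.piCongrLeft_apply_apply]
  exact lintegral_fin_nat_prod_eq_prod fun i => hf _

theorem Measure.pi_withDensity_s15 {ι : Type*} [Fintype ι] {E : Type*} [MeasurableSpace E]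
    {μ : ι → Measure E} [∀ i, SigmaFinite (μ i)] {ρ : ι → E → ℝ≥0∞}
    [∀ i, SigmaFinite ((μ i).withDensity (ρ i))] (hρ : ∀ i, Measurable (ρ i)) :
    Measure.pi (fun i => (μ i).withDensity (ρ i)) =
      (Measure.pi μ).withDensity fun x => ∏ i, ρ i (x i) := by
  refine Measure.pi_eq fun s hs => ?_
  have hind : (univ.pi s).indicator (fun x => ∏ i, ρ i (x i)) =
      fun x => ∏ i, (s i).indicator (ρ i) (x i) := by
    ext x
    classical simp [Set.indicator, Finset.prod_ite_zero]
  rw [withDensity_apply _ (.univ_pi hs), ← lintegral_indicator (.univ_pi hs), hind,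
    lintegral_fintype_prod_eq_prod fun i => (hρ i).indicator (hs i)]
  simp_rw [withDensity_apply _ (hs _), lintegral_indicator (hs _)]

theorem map_add_left_withDensity_le {G : Type*} [MeasurableSpace G] [AddGroup G]
    [MeasurableAdd G] (μ : Measure G) [μ.IsAddLeftInvariant] {ρ : G → ℝ≥0∞} (hρ : Measurable ρ)
    (g : G) {K : ℝ≥0∞} (hρK : ∀ y, ρ (-g + y) ≤ K * ρ y) :
    (μ.withDensity ρ).map (g + ·) ≤ K • μ.withDensity ρ := by
  refine Measure.le_iff.2 fun s hs => ?_
  rw [Measure.map_apply (measurable_const_add g) hs,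
    withDensity_apply _ (measurable_const_add g hs), Measure.smul_apply,
    withDensity_apply _ hs, smul_eq_mul]
  calc ∫⁻ x in (g + ·) ⁻¹' s, ρ x ∂μ = ∫⁻ x in (g + ·) ⁻¹' s, ρ (-g + (g + x)) ∂μ := by
        simp only [neg_add_cancel_left]
    _ = ∫⁻ y in s, ρ (-g + y) ∂μ :=
        (measurePreserving_add_left μ g).setLIntegral_comp_preimage hs
          (hρ.comp (measurable_const_add (-g)))
    _ ≤ ∫⁻ y in s, K * ρ y ∂μ := lintegral_mono fun y => hρK y
    _ = K * ∫⁻ y in s, ρ y ∂μ := lintegral_const_mul K hρ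

theorem measureReal_lt_of_le_smul {α : Type*} [MeasurableSpace α]
    {μ μ' : Measure α} [IsProbabilityMeasure μ] [IsProbabilityMeasure μ'] {K : ℝ≥0}
    (hμ' : μ' ≤ K • μ) {A B : Set α} (hA : MeasurableSet A) (hBA : Disjoint B A) {p : ℝ}
    (hp : p ≤ μ.real A) (hK : K * (1 - p) < 1 / 2) :
    μ'.real B < μ'.real A := by
  have hAc : μ'.real Aᶜ < 1 / 2 := calc
    μ'.real Aᶜ ≤ (K • μ).real Aᶜ := ENNReal.toReal_mono (measure_ne_top _ _) (hμ' _)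
    _ = K * (1 - μ.real A) := by rw [measureReal_nnreal_smul_apply, probReal_compl_eq_one_sub hA]
    _ ≤ K * (1 - p) := by gcongr
    _ < 1 / 2 := hK
  have hB : μ'.real B ≤ μ'.real Aᶜ := measureReal_mono hBA.subset_compl_right
  have hA' : μ'.real A = 1 - μ'.real Aᶜ := by rw [probReal_compl_eq_one_sub hA]; ring
  linarith

end MeasureTheory

theorem Real.exp_div_mul_lt_half {r lam q : ℝ} (hlam : 0 < lam) (hq : 0 < q)
    (h : r < -lam * log (2 * q)) : exp (r / lam) * q < 1 / 2 := by
  have hr : r / lam < -log (2 * q) := by rw [div_lt_iff₀ hlam]; linarith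
  calc exp (r / lam) * q < exp (-log (2 * q)) * q := by gcongr
    _ = 1 / 2 := by rw [exp_neg, exp_log (by positivity)]; field_simp

noncomputable def laplacePDF (lam t : ℝ) : ℝ≥0∞ :=
  ENNReal.ofReal ((2 * lam)⁻¹ * exp (-|t| / lam))

noncomputable def laplaceReal (lam : ℝ) : Measure ℝ :=
  volume.withDensity (laplacePDF lam)

theorem measurable_laplacePDF (lam : ℝ) : Measurable (laplacePDF lam) := by
  unfold laplacePDF; fun_prop

theorem integral_exp_neg_abs_div {lam : ℝ} (hlam : 0 < lam) :
    ∫ t, exp (-|t| / lam) = 2 * lam := by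
  rw [integral_comp_abs (f := fun t => exp (-t / lam))]
  have : ∀ t, -t / lam = -lam⁻¹ * t := fun t => by ring
  simp_rw [this, integral_exp_mul_Ioi (neg_lt_zero.2 (inv_pos.2 hlam)), mul_zero, exp_zero]
  field_simp

theorem lintegral_laplacePDF {lam : ℝ} (hlam : 0 < lam) : ∫⁻ t, laplacePDF lam t = 1 := by
  have hint : Integrable fun t => exp (-|t| / lam) :=
    .of_integral_ne_zero (by rw [integral_exp_neg_abs_div hlam]; positivity)
  unfold laplacePDF
  rw [← ofReal_integral_eq_lintegral_ofReal (hint.const_mul _)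
    (.of_forall fun t => by positivity), integral_const_mul, integral_exp_neg_abs_div hlam,
    inv_mul_cancel₀ (by positivity), ENNReal.ofReal_one]

theorem isProbabilityMeasure_laplaceReal {lam : ℝ} (hlam : 0 < lam) :
    IsProbabilityMeasure (laplaceReal lam) :=
  ⟨by rw [laplaceReal, withDensity_apply _ .univ, Measure.restrict_univ, lintegral_laplacePDF hlam]⟩

theorem laplacePDF_neg_add_le {lam : ℝ} (hlam : 0 < lam) (s t : ℝ) :
    laplacePDF lam (-s + t) ≤ ENNReal.ofReal (exp (|s| / lam)) * laplacePDF lam t := by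
  rw [laplacePDF, laplacePDF, ← ENNReal.ofReal_mul (by positivity)]
  refine ENNReal.ofReal_le_ofReal ?_
  rw [mul_left_comm, ← exp_add]
  gcongr
  rw [neg_add_eq_sub, ← add_div]
  gcongr
  linarith [abs_sub_abs_le_abs_sub t s]

theorem map_add_pi_laplaceReal_le {ι : Type*} [Fintype ι] {lam : ℝ} (hlam : 0 < lam)
    (δ : ι → ℝ) :
    (Measure.pi fun _ : ι => laplaceReal lam).map (δ + ·) ≤
      ENNReal.ofReal (exp ((∑ i, |δ i|) / lam)) • Measure.pi fun _ : ι => laplaceReal lam := by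
  have : IsProbabilityMeasure (volume.withDensity (laplacePDF lam)) :=
    isProbabilityMeasure_laplaceReal hlam
  have hpi : Measure.pi (fun _ : ι => laplaceReal lam) =
      volume.withDensity fun y => ∏ i, laplacePDF lam (y i) := by
    rw [laplaceReal, Measure.pi_withDensity_s15 fun _ => measurable_laplacePDF lam, volume_pi]
  rw [hpi]
  refine map_add_left_withDensity_le volume
    (Finset.measurable_prod _ fun i _ => (measurable_laplacePDF lam).comp (measurable_pi_apply i))
    δ fun y => ?_
  calc ∏ i, laplacePDF lam ((-δ + y) i)
      ≤ ∏ i, ENNReal.ofReal (exp (|δ i| / lam)) * laplacePDF lam (y i) :=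
        Finset.prod_le_prod' fun i _ => laplacePDF_neg_add_le hlam (δ i) (y i)
    _ = ENNReal.ofReal (exp ((∑ i, |δ i|) / lam)) * ∏ i, laplacePDF lam (y i) := by
        rw [Finset.prod_mul_distrib, ← ENNReal.ofReal_prod_of_nonneg fun i _ => (exp_pos _).le,
          ← exp_sum, Finset.sum_div]

theorem laplace_isotropic_certified_robustness_l1_general
    {d : ℕ}
    {C : Type} [MeasurableSpace C] [MeasurableSingletonClass C]
    (lam : ℝ) (hlam : 0 < lam)
    (ν : Measure (Fin d → ℝ))
    (hν : ν = Measure.pi fun _ : Fin d =>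
      volume.withDensity fun t : ℝ =>
        ENNReal.ofReal ((2 * lam)⁻¹ * Real.exp (-|t| / lam)))
    (f : (Fin d → ℝ) → C) (hf : Measurable f)
    (x : Fin d → ℝ) (cA : C) (pA : ℝ) (hpA' : pA < 1)
    (hA : pA ≤ (ν {ε | f (x + ε) = cA}).toReal) :
    ∀ δ : Fin d → ℝ, (∑ i, |δ i|) < -lam * Real.log (2 * (1 - pA)) →
      ∀ c : C, c ≠ cA →
        (ν {ε | f (x + δ + ε) = c}).toReal <
          (ν {ε | f (x + δ + ε) = cA}).toReal := by
  intro δ hδ c hc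
  replace hν : ν = Measure.pi fun _ : Fin d => laplaceReal lam := hν
  have := isProbabilityMeasure_laplaceReal hlam
  have : IsProbabilityMeasure ν := hν ▸ inferInstance
  have := Measure.isProbabilityMeasure_map (μ := ν) (measurable_const_add x).aemeasurable
  have := Measure.isProbabilityMeasure_map (μ := ν) (measurable_const_add (x + δ)).aemeasurable
  set K : ℝ≥0 := (exp ((∑ i, |δ i|) / lam)).toNNReal
  have hshift : ν.map (x + δ + ·) ≤ K • ν.map (x + ·) := by
    have hcomp : (fun ε => x + δ + ε) = (x + ·) ∘ (δ + ·) := funext (add_assoc x δ)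
    rw [hcomp, ← Measure.map_map (measurable_const_add x) (measurable_const_add δ),
      ← Measure.map_smul]
    exact Measure.map_mono (hν ▸ map_add_pi_laplaceReal_le hlam δ) (measurable_const_add x)
  have hK : (K : ℝ) * (1 - pA) < 1 / 2 := by
    rw [Real.coe_toNNReal _ (exp_pos _).le]
    exact exp_div_mul_lt_half hlam (by linarith) hδ
  have hfc : ∀ c', MeasurableSet (f ⁻¹' {c'}) := fun c' => hf (measurableSet_singleton c')
  have hAx : pA ≤ (ν.map (x + ·)).real (f ⁻¹' {cA}) := by
    rwa [map_measureReal_apply (measurable_const_add x) (hfc cA)]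
  have := measureReal_lt_of_le_smul hshift (hfc cA) ((disjoint_singleton.2 hc).preimage f) hAx hK
  rwa [map_measureReal_apply (measurable_const_add _) (hfc c),
    map_measureReal_apply (measurable_const_add _) (hfc cA)] at this

/-- Certified robustness against `ℓ_1` perturbations with isotropic Laplace noise
of scale `λ` (density `t ↦ (2λ)⁻¹ exp(−|t|/λ)` per coordinate): the certified
radius is `−λ·log(2(1 − p_A))`. -/
theorem laplace_isotropic_certified_robustness_l1
    {d : ℕ} (hd : 1 ≤ d)
    {C : Type} [Fintype C] [MeasurableSpace C] [MeasurableSingletonClass C]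
    (lam : ℝ) (hlam : 0 < lam)
    (ν : Measure (Fin d → ℝ))
    (hν : ν = Measure.pi fun _ : Fin d =>
      volume.withDensity fun t : ℝ =>
        ENNReal.ofReal ((2 * lam)⁻¹ * Real.exp (-|t| / lam)))
    (f : (Fin d → ℝ) → C) (hf : Measurable f)
    (x : Fin d → ℝ) (cA : C) (pA : ℝ) (hpA : 1 / 2 < pA) (hpA' : pA < 1)
    (hA : pA ≤ (ν {ε | f (x + ε) = cA}).toReal)
    (hB : ∀ c : C, c ≠ cA → (ν {ε | f (x + ε) = c}).toReal ≤ 1 - pA) :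
    ∀ δ : Fin d → ℝ, (∑ i, |δ i|) < -lam * Real.log (2 * (1 - pA)) →
      ∀ c : C, c ≠ cA →
        (ν {ε | f (x + δ + ε) = c}).toReal <
          (ν {ε | f (x + δ + ε) = cA}).toReal :=
  laplace_isotropic_certified_robustness_l1_general lam hlam ν hν f hf x cA pA hpA' hA
end
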